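/- arXiv:2303.07162 — 4 statements merged into one kernel-verified Lean document; each statement's English description precedes it below -/
import Mathlib

section
/- Let d ≥ 1, γ > d/2, M(v) = (1+|v|²)^{-γ/2} on ℝ^d. For every smooth compactly supported ψ : ℝ^d → ℂ, ∫ |∇_v(ψ/M)|² M² dv + ∫ (γ(γ+2)/(1+|v|²)²)|ψ|² dv = ∫ |∇_v ψ|² dv + γ(γ-d+2) ∫ |ψ|²/(1+|v|²) dv. -/
open MeasureTheory Real

noncomputable section

/-- Partial derivative of `f` in the `i`-th coordinate direction. -/
def pDeriv {d : ℕ} {G : Type*} [NormedAddCommGroup G] [NormedSpace ℝ G]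
    (f : EuclideanSpace ℝ (Fin d) → G) (i : Fin d) (v : EuclideanSpace ℝ (Fin d)) : G :=
  fderiv ℝ f v (EuclideanSpace.single i 1)

namespace Stmt2Aux

variable {d : ℕ}

local notation "E" => EuclideanSpace ℝ (Fin d)

/-- The derivative of `w ↦ 1 + ‖w‖²` at `v`. -/
def QL (v : E) : E →L[ℝ] ℝ := ∑ i, (2 * v i) • EuclideanSpace.proj (𝕜 := ℝ) i

/-- `|ψ|²`. -/
def uF (ψ : E → ℂ) : E → ℝ := fun w => (ψ w).re * (ψ w).re + (ψ w).im * (ψ w).im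

/-- The vector field `γ vᵢ/(1+|v|²)`. -/
def WF (γ : ℝ) (i : Fin d) : E → ℝ := fun w => γ * w i / (1 + ‖w‖ ^ 2)

/-- `∂ᵢ (WF i)`. -/
def DWF (γ : ℝ) (i : Fin d) : E → ℝ :=
  fun v => γ * ((1 + ‖v‖ ^ 2) - 2 * (v i) ^ 2) / (1 + ‖v‖ ^ 2) ^ 2

/-- `∂ᵢ uF`. -/
def duF (ψ : E → ℂ) (i : Fin d) : E → ℝ :=
  fun v => 2 * ((ψ v).re * (pDeriv ψ i v).re + (ψ v).im * (pDeriv ψ i v).im)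

lemma cnorm_sq (z : ℂ) : ‖z‖ ^ 2 = z.re * z.re + z.im * z.im := by
  rw [Complex.sq_norm, Complex.normSq_apply]

lemma norm_sq_eq (v : E) : ‖v‖ ^ 2 = ∑ i, v i ^ 2 := by
  rw [EuclideanSpace.norm_eq, sq_sqrt (by positivity)]; simp [sq_abs]

lemma Qpos (v : E) : 0 < 1 + ‖v‖ ^ 2 := by positivity

lemma QL_apply (v : E) (j : Fin d) : QL v (EuclideanSpace.single j 1) = 2 * v j := by
  simp [QL, ContinuousLinearMap.sum_apply, EuclideanSpace.single_apply,
    Finset.sum_ite_eq', Finset.mem_univ]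

lemma hasFDerivAt_Q (v : E) : HasFDerivAt (fun w : E => 1 + ‖w‖ ^ 2) (QL v) v := by
  have he : (fun w : E => 1 + ‖w‖ ^ 2) = fun w : E => 1 + ∑ i, w i ^ 2 :=
    funext fun w => by rw [norm_sq_eq]
  rw [he]
  have h : HasFDerivAt (fun w : E => ∑ i, w i ^ 2) (QL v) v := by
    have h2 : HasFDerivAt (fun w : E => ∑ i : Fin d, w i ^ 2)
        (∑ i : Fin d, ((v i) • EuclideanSpace.proj (𝕜 := ℝ) i
          + (v i) • EuclideanSpace.proj (𝕜 := ℝ) i)) v := by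
      refine HasFDerivAt.fun_sum fun i _ => ?_
      have hp := ((EuclideanSpace.proj (𝕜 := ℝ) i).hasFDerivAt (x := v)).mul
        ((EuclideanSpace.proj (𝕜 := ℝ) i).hasFDerivAt (x := v))
      simp only [sq]; exact hp
    convert h2 using 1
    unfold QL
    refine Finset.sum_congr rfl fun i _ => ?_
    rw [two_mul, add_smul]
  exact h.const_add 1

lemma hasFDerivAt_rpowQ (p : ℝ) (v : E) :
    HasFDerivAt (fun w : E => (1 + ‖w‖ ^ 2) ^ p)
      ((p * (1 + ‖v‖ ^ 2) ^ (p - 1)) • QL v) v :=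
  HasDerivAt.comp_hasFDerivAt (h₂ := fun x : ℝ => x ^ p) v (Real.hasDerivAt_rpow_const (x := 1 + ‖v‖ ^ 2) (p := p)
    (Or.inl (Qpos v).ne')) (hasFDerivAt_Q v)

lemma hasFDerivAt_uF (ψ : E → ℂ) (hψ : Differentiable ℝ ψ) (v : E) :
    HasFDerivAt (uF ψ)
      ((ψ v).re • (Complex.reCLM.comp (fderiv ℝ ψ v))
        + (ψ v).re • (Complex.reCLM.comp (fderiv ℝ ψ v))
        + ((ψ v).im • (Complex.imCLM.comp (fderiv ℝ ψ v))
          + (ψ v).im • (Complex.imCLM.comp (fderiv ℝ ψ v)))) v := by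
  have hψd := (hψ v).hasFDerivAt
  have hre : HasFDerivAt (fun w : E => (ψ w).re) (Complex.reCLM.comp (fderiv ℝ ψ v)) v :=
    Complex.reCLM.hasFDerivAt.comp v hψd
  have him : HasFDerivAt (fun w : E => (ψ w).im) (Complex.imCLM.comp (fderiv ℝ ψ v)) v :=
    Complex.imCLM.hasFDerivAt.comp v hψd
  exact (hre.mul hre).add (him.mul him)

lemma pDeriv_uF (ψ : E → ℂ) (hψ : Differentiable ℝ ψ) (i : Fin d) (v : E) :
    pDeriv (uF ψ) i v = duF ψ i v := by
  rw [pDeriv, (hasFDerivAt_uF ψ hψ v).fderiv]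
  simp only [duF, ContinuousLinearMap.add_apply, ContinuousLinearMap.smul_apply,
    ContinuousLinearMap.coe_comp', Function.comp_apply, Complex.reCLM_apply,
    Complex.imCLM_apply, smul_eq_mul, pDeriv]
  ring

lemma hasFDerivAt_WF (γ : ℝ) (i : Fin d) (v : E) :
    HasFDerivAt (WF γ i)
      (((1 + ‖v‖ ^ 2)⁻¹) • (γ • (EuclideanSpace.proj (𝕜 := ℝ) i))
        + (γ * v i) • ((-(1 + ‖v‖ ^ 2) ^ (-2 : ℝ)) • QL v)) v := by
  have hinv : HasFDerivAt (fun w : E => (1 + ‖w‖ ^ 2)⁻¹)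
      ((-(1 + ‖v‖ ^ 2) ^ (-2 : ℝ)) • QL v) v := by
    have h := hasFDerivAt_rpowQ (-1) v
    have he : (fun w : E => (1 + ‖w‖ ^ 2) ^ (-1 : ℝ)) = fun w : E => (1 + ‖w‖ ^ 2)⁻¹ :=
      funext fun w => by rw [Real.rpow_neg_one]
    rw [he] at h
    convert h using 2
    norm_num
  have hnum : HasFDerivAt (fun w : E => γ * w i) (γ • (EuclideanSpace.proj (𝕜 := ℝ) i)) v :=
    ((EuclideanSpace.proj (𝕜 := ℝ) i).hasFDerivAt (x := v)).const_mul γ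
  have hmul := hnum.mul hinv
  have he : WF γ i = fun w : E => (γ * w i) * (1 + ‖w‖ ^ 2)⁻¹ :=
    funext fun w => by rw [WF, div_eq_mul_inv]
  rw [he]
  rw [add_comm]
  exact hmul

lemma rpow_neg_two (v : E) : (1 + ‖v‖ ^ 2) ^ (-2 : ℝ) = ((1 + ‖v‖ ^ 2) ^ 2)⁻¹ := by
  rw [show (-2 : ℝ) = -(2 : ℕ) by norm_num, Real.rpow_neg (Qpos v).le, Real.rpow_natCast]

lemma pDeriv_WF (γ : ℝ) (i : Fin d) (v : E) :
    pDeriv (WF γ i) i v = DWF γ i v := by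
  rw [pDeriv, (hasFDerivAt_WF γ i v).fderiv]
  have hQ0 := (Qpos v).ne'
  simp only [ContinuousLinearMap.add_apply, ContinuousLinearMap.smul_apply, QL_apply,
    smul_eq_mul]
  rw [show (EuclideanSpace.proj (𝕜 := ℝ) i) (EuclideanSpace.single i (1 : ℝ)) = 1 by
    simp [EuclideanSpace.single_apply]]
  rw [rpow_neg_two, DWF]
  field_simp
  ring

lemma pDeriv_phi (γ : ℝ) (M : E → ℝ) (hM : ∀ v, M v = (1 + ‖v‖ ^ 2) ^ (-(γ / 2)))
    (ψ : E → ℂ) (hψ : Differentiable ℝ ψ) (i : Fin d) (v : E) :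
    pDeriv (fun w => ψ w / (M w : ℂ)) i v
      = (((1 + ‖v‖ ^ 2) ^ (γ / 2) : ℝ) : ℂ)
        * (pDeriv ψ i v + ((WF γ i v : ℝ) : ℂ) * ψ v) := by
  have hN := hasFDerivAt_rpowQ (γ / 2) v
  have hNc : HasFDerivAt (fun w : E => (((1 + ‖w‖ ^ 2) ^ (γ / 2) : ℝ) : ℂ))
      (Complex.ofRealCLM.comp ((γ / 2 * (1 + ‖v‖ ^ 2) ^ (γ / 2 - 1)) • QL v)) v :=
    Complex.ofRealCLM.hasFDerivAt.comp v hN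
  have hmul := ((hψ v).hasFDerivAt).fun_mul' hNc
  have hfun : (fun w => ψ w / (M w : ℂ))
      = fun w : E => ψ w * (((1 + ‖w‖ ^ 2) ^ (γ / 2) : ℝ) : ℂ) := by
    funext w
    rw [hM w, div_eq_mul_inv, ← Complex.ofReal_inv,
      Real.rpow_neg (Qpos w).le, inv_inv]
  rw [pDeriv, hfun, hmul.fderiv]
  simp only [ContinuousLinearMap.add_apply, ContinuousLinearMap.smul_apply,
    ContinuousLinearMap.smulRight_apply, ContinuousLinearMap.coe_comp', Function.comp_apply,
    ContinuousLinearMap.coe_smul', Pi.smul_apply, QL_apply, Complex.ofRealCLM_apply, WF, op_smul_eq_mul, smul_eq_mul]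
  have hQ0 : (1 + ‖v‖ ^ 2) ≠ 0 := (Qpos v).ne'
  have hsub : (1 + ‖v‖ ^ 2) ^ (γ / 2 - 1) = (1 + ‖v‖ ^ 2) ^ (γ / 2) / (1 + ‖v‖ ^ 2) := by
    rw [Real.rpow_sub (Qpos v), Real.rpow_one]
  rw [hsub, pDeriv]
  have hQC : ((1 + ‖v‖ ^ 2 : ℝ) : ℂ) ≠ 0 := by exact_mod_cast hQ0
  push_cast
  push_cast at hQC
  field_simp [hQC]
  ring

lemma key_pointwise (γ : ℝ) (M : E → ℝ) (hM : ∀ v, M v = (1 + ‖v‖ ^ 2) ^ (-(γ / 2)))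
    (ψ : E → ℂ) (hψ : Differentiable ℝ ψ) (v : E) :
    (∑ i, ‖pDeriv (fun w => ψ w / (M w : ℂ)) i v‖ ^ 2) * M v ^ 2
      = (∑ i, ‖pDeriv ψ i v‖ ^ 2)
        + ((∑ i, duF ψ i v * WF γ i v) + (∑ i, (WF γ i v) ^ 2) * uF ψ v) := by
  have hterm : ∀ i : Fin d, ‖pDeriv (fun w => ψ w / (M w : ℂ)) i v‖ ^ 2 * M v ^ 2
      = ‖pDeriv ψ i v‖ ^ 2 + (duF ψ i v * WF γ i v + (WF γ i v) ^ 2 * uF ψ v) := by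
    intro i
    rw [pDeriv_phi γ M hM ψ hψ i v]
    have hNM : (((1 + ‖v‖ ^ 2) ^ (γ / 2) : ℝ)) ^ 2 * M v ^ 2 = 1 := by
      rw [hM v, ← mul_pow, ← Real.rpow_add (Qpos v)]
      simp
    rw [norm_mul, mul_pow, Complex.norm_real, Real.norm_eq_abs, sq_abs,
      mul_comm (((1 + ‖v‖ ^ 2) ^ (γ / 2)) ^ 2), mul_assoc, hNM, mul_one]
    rw [cnorm_sq, cnorm_sq (pDeriv ψ i v)]
    simp only [duF, WF, uF, Complex.add_re, Complex.add_im, Complex.mul_re, Complex.mul_im,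
      Complex.ofReal_re, Complex.ofReal_im]
    ring
  calc (∑ i, ‖pDeriv (fun w => ψ w / (M w : ℂ)) i v‖ ^ 2) * M v ^ 2
      = ∑ i, ‖pDeriv (fun w => ψ w / (M w : ℂ)) i v‖ ^ 2 * M v ^ 2 := Finset.sum_mul _ _ _
    _ = ∑ i, (‖pDeriv ψ i v‖ ^ 2 + (duF ψ i v * WF γ i v + (WF γ i v) ^ 2 * uF ψ v)) :=
        Finset.sum_congr rfl fun i _ => hterm i
    _ = (∑ i, ‖pDeriv ψ i v‖ ^ 2)
        + ((∑ i, duF ψ i v * WF γ i v) + (∑ i, (WF γ i v) ^ 2) * uF ψ v) := by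
        rw [Finset.sum_add_distrib, Finset.sum_add_distrib, Finset.sum_mul]

lemma sum_WF_sq (γ : ℝ) (v : E) :
    ∑ i, (WF γ i v) ^ 2 = γ ^ 2 * ‖v‖ ^ 2 / (1 + ‖v‖ ^ 2) ^ 2 := by
  simp only [WF, div_pow, mul_pow]
  rw [← Finset.sum_div, ← Finset.mul_sum, ← norm_sq_eq]

lemma sum_DWF (γ : ℝ) (v : E) :
    ∑ i, DWF γ i v = γ * (d * (1 + ‖v‖ ^ 2) - 2 * ‖v‖ ^ 2) / (1 + ‖v‖ ^ 2) ^ 2 := by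
  simp only [DWF]
  rw [← Finset.sum_div, ← Finset.mul_sum]
  congr 2
  rw [Finset.sum_sub_distrib, Finset.sum_const, ← Finset.mul_sum, ← norm_sq_eq]
  simp only [Finset.card_univ, Fintype.card_fin, nsmul_eq_mul]

lemma ibp (γ : ℝ) (ψ : E → ℂ) (hψ : ContDiff ℝ (⊤ : ℕ∞) ψ) (hc : HasCompactSupport ψ) (i : Fin d) :
    ∫ v, duF ψ i v * WF γ i v = - ∫ v, uF ψ v * DWF γ i v := by
  have hψd : Differentiable ℝ ψ := hψ.differentiable (by simp)
  have hud : Differentiable ℝ (uF ψ) := fun v => (hasFDerivAt_uF ψ hψd v).differentiableAt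
  have hWd : Differentiable ℝ (WF γ i) := fun v => (hasFDerivAt_WF γ i v).differentiableAt
  have hcu : HasCompactSupport (uF ψ) :=
    hc.comp_left (g := fun z : ℂ => z.re * z.re + z.im * z.im) (by simp)
  have hucont : Continuous (uF ψ) := hud.continuous
  have hWcont : Continuous (WF γ i) := hWd.continuous
  have huC : ContDiff ℝ (⊤ : ℕ∞) (uF ψ) := by
    have h1 : ContDiff ℝ (⊤ : ℕ∞) fun w : E => (ψ w).re := Complex.reCLM.contDiff.comp hψ
    have h2 : ContDiff ℝ (⊤ : ℕ∞) fun w : E => (ψ w).im := Complex.imCLM.contDiff.comp hψ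
    exact (h1.mul h1).add (h2.mul h2)
  have hWC : ContDiff ℝ (⊤ : ℕ∞) (WF γ i) := by
    refine ContDiff.div ?_ ?_ fun v => (Qpos v).ne'
    · exact contDiff_const.mul (EuclideanSpace.proj (𝕜 := ℝ) i).contDiff
    · exact contDiff_const.add (contDiff_norm_sq ℝ)
  have hducont : Continuous fun v : E => fderiv ℝ (uF ψ) v (EuclideanSpace.single i 1) :=
    (huC.continuous_fderiv (by simp)).clm_apply continuous_const
  have hdWcont : Continuous fun v : E => fderiv ℝ (WF γ i) v (EuclideanSpace.single i 1) :=
    (hWC.continuous_fderiv (by simp)).clm_apply continuous_const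
  have hcdu : HasCompactSupport fun v : E => fderiv ℝ (uF ψ) v (EuclideanSpace.single i 1) :=
    hcu.fderiv_apply ℝ (EuclideanSpace.single i 1)
  have h1 : Integrable (fun x : E => fderiv ℝ (WF γ i) x (EuclideanSpace.single i 1) * uF ψ x) :=
    (hdWcont.mul hucont).integrable_of_hasCompactSupport hcu.mul_left
  have h2 : Integrable (fun x : E => WF γ i x * fderiv ℝ (uF ψ) x (EuclideanSpace.single i 1)) :=
    (hWcont.mul hducont).integrable_of_hasCompactSupport hcdu.mul_left
  have h3 : Integrable (fun x : E => WF γ i x * uF ψ x) :=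
    (hWcont.mul hucont).integrable_of_hasCompactSupport hcu.mul_left
  have h := integral_mul_fderiv_eq_neg_fderiv_mul_of_integrable h1 h2 h3 (fun x _ => hWd x) (fun x _ => hud x)
  have e1 : (fun v : E => duF ψ i v * WF γ i v)
      = fun x : E => WF γ i x * fderiv ℝ (uF ψ) x (EuclideanSpace.single i 1) := by
    funext v
    rw [show fderiv ℝ (uF ψ) v (EuclideanSpace.single i 1) = pDeriv (uF ψ) i v from rfl,
      pDeriv_uF ψ hψd i v, mul_comm]
  have e2 : (fun x : E => fderiv ℝ (WF γ i) x (EuclideanSpace.single i 1) * uF ψ x)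
      = fun v : E => uF ψ v * DWF γ i v := by
    funext v
    rw [show fderiv ℝ (WF γ i) v (EuclideanSpace.single i 1) = pDeriv (WF γ i) i v from rfl,
      pDeriv_WF, mul_comm]
  rw [e1, h, e2]

end Stmt2Aux

open Stmt2Aux

theorem stmt2 (d : ℕ) (hd : 1 ≤ d) (γ : ℝ) (hγ : (d : ℝ) / 2 < γ)
    (M : EuclideanSpace ℝ (Fin d) → ℝ)
    (hM : ∀ v, M v = (1 + ‖v‖ ^ 2) ^ (-(γ / 2)))
    (ψ : EuclideanSpace ℝ (Fin d) → ℂ)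
    (hψ : ContDiff ℝ (⊤ : ℕ∞) ψ) (hc : HasCompactSupport ψ) :
    (∫ v, (∑ i, ‖pDeriv (fun w => ψ w / (M w : ℂ)) i v‖ ^ 2) * (M v) ^ 2)
      + (∫ v, (γ * (γ + 2) / (1 + ‖v‖ ^ 2) ^ 2) * ‖ψ v‖ ^ 2)
    = (∫ v, ∑ i, ‖pDeriv ψ i v‖ ^ 2)
      + γ * (γ - d + 2) * ∫ v, ‖ψ v‖ ^ 2 / (1 + ‖v‖ ^ 2) := by
  have hψd : Differentiable ℝ ψ := hψ.differentiable (by simp)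
  have hψc : Continuous ψ := hψ.continuous
  have hQcont : Continuous fun v : EuclideanSpace ℝ (Fin d) => 1 + ‖v‖ ^ 2 :=
    continuous_const.add (continuous_norm.pow 2)
  have hca : ∀ i, Continuous fun v => pDeriv ψ i v := fun i =>
    (hψ.continuous_fderiv (by simp)).clm_apply continuous_const
  have hucont : Continuous (uF ψ) :=
    ((Complex.continuous_re.comp hψc).mul (Complex.continuous_re.comp hψc)).add
      ((Complex.continuous_im.comp hψc).mul (Complex.continuous_im.comp hψc))
  have hWcont : ∀ i, Continuous (WF γ i) := fun i =>
    (continuous_const.mul (EuclideanSpace.proj (𝕜 := ℝ) i).continuous).div hQcont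
      fun v => (Qpos v).ne'
  have hducont : ∀ i, Continuous (duF ψ i) := fun i =>
    continuous_const.mul
      (((Complex.continuous_re.comp hψc).mul (Complex.continuous_re.comp (hca i))).add
        ((Complex.continuous_im.comp hψc).mul (Complex.continuous_im.comp (hca i))))
  have hDWcont : ∀ i, Continuous (DWF γ i) := fun i =>
    (continuous_const.mul (hQcont.sub
      (continuous_const.mul ((EuclideanSpace.proj (𝕜 := ℝ) i).continuous.pow 2)))).div
      (hQcont.pow 2) fun v => pow_ne_zero 2 (Qpos v).ne'
  have h0ψ : ∀ v, v ∉ tsupport ψ → ψ v = 0 := fun v hv =>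
    image_eq_zero_of_notMem_tsupport hv
  have h0dψ : ∀ v, v ∉ tsupport ψ → fderiv ℝ ψ v = 0 := fun v hv =>
    Function.notMem_support.mp fun hmem => hv (support_fderiv_subset ℝ hmem)
  have hcs : ∀ f : EuclideanSpace ℝ (Fin d) → ℝ,
      (∀ v, v ∉ tsupport ψ → f v = 0) → HasCompactSupport f := fun f h =>
    hc.mono' fun v hv => by_contra fun h' => hv (h v h')
  have int1 : Integrable (fun v => ∑ i, ‖pDeriv ψ i v‖ ^ 2) :=
    (continuous_finset_sum _ fun i _ => ((hca i).norm.pow 2)).integrable_of_hasCompactSupport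
      (hcs _ fun v hv => by simp [pDeriv, h0dψ v hv])
  have int2 : ∀ i, Integrable (fun v => duF ψ i v * WF γ i v) := fun i =>
    (((hducont i).mul (hWcont i)).integrable_of_hasCompactSupport
      (hcs _ fun v hv => by simp [duF, h0ψ v hv]))
  have int3 : Integrable (fun v => (∑ i, (WF γ i v) ^ 2) * uF ψ v) :=
    ((continuous_finset_sum _ fun i _ => ((hWcont i).pow 2)).mul
      hucont).integrable_of_hasCompactSupport
      (hcs _ fun v hv => by simp [uF, h0ψ v hv])
  have int4 : Integrable (fun v => (γ * (γ + 2) / (1 + ‖v‖ ^ 2) ^ 2) * uF ψ v) :=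
    ((continuous_const.div (hQcont.pow 2) fun v => pow_ne_zero 2 (Qpos v).ne').mul
      hucont).integrable_of_hasCompactSupport
      (hcs _ fun v hv => by simp [uF, h0ψ v hv])
  have int5 : Integrable (fun v => uF ψ v / (1 + ‖v‖ ^ 2)) :=
    (hucont.div hQcont fun v => (Qpos v).ne').integrable_of_hasCompactSupport
      (hcs _ fun v hv => by simp [uF, h0ψ v hv])
  have int6 : ∀ i, Integrable (fun v => uF ψ v * DWF γ i v) := fun i =>
    (hucont.mul (hDWcont i)).integrable_of_hasCompactSupport
      (hcs _ fun v hv => by simp [uF, h0ψ v hv])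
  have hnorm : ∀ v : EuclideanSpace ℝ (Fin d), ‖ψ v‖ ^ 2 = uF ψ v := fun v => by
    rw [cnorm_sq]; rfl
  rw [show (∫ v, (∑ i, ‖pDeriv (fun w => ψ w / (M w : ℂ)) i v‖ ^ 2) * (M v) ^ 2)
      = ∫ v, ((∑ i, ‖pDeriv ψ i v‖ ^ 2)
        + ((∑ i, duF ψ i v * WF γ i v) + (∑ i, (WF γ i v) ^ 2) * uF ψ v)) from by
    congr 1
    funext v
    exact key_pointwise γ M hM ψ hψd v]
  simp only [hnorm]
  have intmid : Integrable (fun v => ∑ i, duF ψ i v * WF γ i v) volume :=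
    integrable_finset_sum _ fun i _ => int2 i
  have int23 : Integrable
      (fun v => (∑ i, duF ψ i v * WF γ i v) + (∑ i, (WF γ i v) ^ 2) * uF ψ v) volume :=
    intmid.add int3
  rw [integral_add int1 int23,
    integral_add intmid int3,
    integral_finset_sum _ fun i _ => int2 i,
    Finset.sum_congr rfl fun i (_ : i ∈ Finset.univ) => ibp γ ψ hψ hc i]
  have hfinal : (∫ v, (∑ i, (WF γ i v) ^ 2) * uF ψ v)
      + (∫ v, (γ * (γ + 2) / (1 + ‖v‖ ^ 2) ^ 2) * uF ψ v)
      - (∑ i, ∫ v, uF ψ v * DWF γ i v)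
      = γ * (γ - d + 2) * ∫ v, uF ψ v / (1 + ‖v‖ ^ 2) := by
    have intG6 : Integrable (fun v => ∑ i, uF ψ v * DWF γ i v) volume :=
      integrable_finset_sum _ fun i _ => int6 i
    have int34 : Integrable (fun v => (∑ i, (WF γ i v) ^ 2) * uF ψ v
        + (γ * (γ + 2) / (1 + ‖v‖ ^ 2) ^ 2) * uF ψ v) volume := int3.add int4
    rw [← integral_finset_sum _ fun i _ => int6 i,
      ← integral_add int3 int4,
      ← integral_sub int34 intG6]
    rw [show (∫ v, ((∑ i, (WF γ i v) ^ 2) * uF ψ v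
          + (γ * (γ + 2) / (1 + ‖v‖ ^ 2) ^ 2) * uF ψ v
          - ∑ i, uF ψ v * DWF γ i v))
        = ∫ v, γ * (γ - d + 2) * (uF ψ v / (1 + ‖v‖ ^ 2)) from by
      congr 1
      funext v
      rw [← Finset.mul_sum, sum_WF_sq, sum_DWF]
      have hQ0 := (Qpos v).ne'
      field_simp
      ring]
    exact integral_const_mul _ _
  have hneg : (∑ i : Fin d, -(∫ v, uF ψ v * DWF γ i v)) 
      = -(∑ i : Fin d, ∫ v, uF ψ v * DWF γ i v) := by simp
  rw [hneg]
  linarith [hfinal]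

end
end

section
/- Let d ≥ 1, γ > d/2, M(v) = (1+|v|²)^{-γ/2}, Q̃ := -Δ_v + γ(γ-d+2)/(1+|v|²). Then Q̃ is dissipative: for every ψ ∈ C_c^∞(ℝ^d, ℝ), ∫_{ℝ^d} Q̃(ψ) ψ dv = ∫_{ℝ^d} ( |∇_v(ψ/M)|² M² + (γ(γ+2)/(1+|v|²)²) ψ² ) dv ≥ 0. -/
open MeasureTheory Real

noncomputable section

/-- Laplacian as the sum of the second partial derivatives. -/
def lap {d : ℕ} {G : Type*} [NormedAddCommGroup G] [NormedSpace ℝ G]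
    (f : EuclideanSpace ℝ (Fin d) → G) (v : EuclideanSpace ℝ (Fin d)) : G :=
  ∑ i, pDeriv (fun w => pDeriv f i w) i v

section Aux

variable {d : ℕ}

local notation "E" => EuclideanSpace ℝ (Fin d)

lemma pDeriv_fun_add {f g : E → ℝ} {i : Fin d} {v : E}
    (hf : DifferentiableAt ℝ f v) (hg : DifferentiableAt ℝ g v) :
    pDeriv (fun w => f w + g w) i v = pDeriv f i v + pDeriv g i v := by
  simp [pDeriv, fderiv_fun_add hf hg]

lemma pDeriv_fun_mul {f g : E → ℝ} {i : Fin d} {v : E}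
    (hf : DifferentiableAt ℝ f v) (hg : DifferentiableAt ℝ g v) :
    pDeriv (fun w => f w * g w) i v = pDeriv f i v * g v + f v * pDeriv g i v := by
  simp [pDeriv, fderiv_fun_mul hf hg]; ring

lemma pDeriv_const_mul {f : E → ℝ} {i : Fin d} {v : E} (c : ℝ)
    (hf : DifferentiableAt ℝ f v) :
    pDeriv (fun w => c * f w) i v = c * pDeriv f i v := by
  simp [pDeriv, fderiv_const_mul hf c]

lemma hasFDerivAt_one_add_normSq (v : E) :
    HasFDerivAt (fun w : E => 1 + ‖w‖ ^ 2) (2 • innerSL ℝ v) v := by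
  simpa using ((hasFDerivAt_id v).norm_sq).const_add (1:ℝ)

lemma pDeriv_one_add_normSq (i : Fin d) (v : E) :
    pDeriv (fun w : E => 1 + ‖w‖ ^ 2) i v = 2 * v i := by
  rw [pDeriv, (hasFDerivAt_one_add_normSq v).fderiv]
  simp [EuclideanSpace.inner_single_right]

lemma pDeriv_coord (i : Fin d) (v : E) :
    pDeriv (fun w : E => w i) i v = 1 := by
  have h : (fun w : E => w i) = ⇑(EuclideanSpace.proj (𝕜 := ℝ) i) := rfl
  rw [pDeriv, h, ContinuousLinearMap.fderiv]
  simp [EuclideanSpace.proj, EuclideanSpace.single_apply]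

lemma pDeriv_rpow (p : ℝ) (i : Fin d) (v : E) :
    pDeriv (fun w : E => (1 + ‖w‖ ^ 2) ^ p) i v
      = p * (1 + ‖v‖ ^ 2) ^ (p - 1) * (2 * v i) := by
  have h0 : (1:ℝ) + ‖v‖ ^ 2 ≠ 0 := by positivity
  rw [pDeriv, ((hasFDerivAt_one_add_normSq v).rpow_const (Or.inl h0)).fderiv]
  simp [EuclideanSpace.inner_single_right]

lemma contDiff_pDeriv (f : E → ℝ) (hf : ContDiff ℝ (⊤ : ℕ∞) f) (i : Fin d) :
    ContDiff ℝ (⊤ : ℕ∞) (pDeriv f i) :=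
  ContDiff.clm_apply (hf.fderiv_right (by simp)) contDiff_const

lemma hasCompactSupport_pDeriv {f : E → ℝ} (hc : HasCompactSupport f) (i : Fin d) :
    HasCompactSupport (pDeriv f i) :=
  hc.fderiv_apply ℝ (EuclideanSpace.single i 1)

lemma integral_pDeriv_eq_zero {f : E → ℝ} (hf : ContDiff ℝ (⊤ : ℕ∞) f)
    (hc : HasCompactSupport f) (i : Fin d) : ∫ v, pDeriv f i v = 0 := by
  have h1 : Integrable (fun v : E => fderiv ℝ f v (EuclideanSpace.single i 1) * 1) := by
    simp only [mul_one]; exact (contDiff_pDeriv f hf i).continuous.integrable_of_hasCompactSupport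
      (hasCompactSupport_pDeriv hc i)
  have h2 : Integrable
      (fun v : E => f v * fderiv ℝ (fun _ => (1:ℝ)) v (EuclideanSpace.single i 1)) := by
    simp only [fderiv_fun_const]
    simpa using (integrable_zero E ℝ (volume : Measure E))
  have h3 : Integrable (fun v : E => f v * 1) := by
    simpa using hf.continuous.integrable_of_hasCompactSupport hc
  have := integral_mul_fderiv_eq_neg_fderiv_mul_of_integrable h1 h2 h3
    (fun x _ => hf.differentiable (by simp) x) (fun x _ => differentiable_const (1:ℝ) x)
  simp only [fderiv_fun_const, Pi.zero_apply, ContinuousLinearMap.zero_apply, mul_zero, mul_one,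
    integral_zero] at this
  simpa [pDeriv] using this.symm

/-- The vector field whose divergence realizes the difference of the two integrands. -/
def Ffun (γ : ℝ) (ψ : E → ℝ) (i : Fin d) (v : E) : ℝ :=
  ψ v * (pDeriv ψ i v + ψ v * (γ * v i * (1 + ‖v‖ ^ 2) ^ (-1 : ℝ)))

lemma contDiff_Ffun (γ : ℝ) {ψ : E → ℝ} (hψ : ContDiff ℝ (⊤ : ℕ∞) ψ) (i : Fin d) :
    ContDiff ℝ (⊤ : ℕ∞) (Ffun γ ψ i) := by
  have hq : ContDiff ℝ (⊤ : ℕ∞) (fun v : E => 1 + ‖v‖ ^ 2) := contDiff_const.add (contDiff_norm_sq ℝ)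
  have hrp : ContDiff ℝ (⊤ : ℕ∞) (fun v : E => (1 + ‖v‖ ^ 2) ^ (-1 : ℝ)) :=
    hq.rpow_const_of_ne (fun v => by positivity)
  have hco : ContDiff ℝ (⊤ : ℕ∞) (fun v : E => v i) := (EuclideanSpace.proj (𝕜 := ℝ) i).contDiff
  exact hψ.mul ((contDiff_pDeriv ψ hψ i).add
    (hψ.mul ((contDiff_const.mul hco).mul hrp)))

lemma hasCompactSupport_Ffun (γ : ℝ) {ψ : E → ℝ} (hc : HasCompactSupport ψ) (i : Fin d) :
    HasCompactSupport (Ffun γ ψ i) :=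
  hc.mul_right

lemma pDeriv_Ffun (γ : ℝ) {ψ : E → ℝ} (hψ : ContDiff ℝ (⊤ : ℕ∞) ψ) (i : Fin d) (v : E) :
    pDeriv (Ffun γ ψ i) i v
      = pDeriv ψ i v * (pDeriv ψ i v + ψ v * (γ * v i * (1 + ‖v‖ ^ 2) ^ (-1 : ℝ)))
        + ψ v * (pDeriv (pDeriv ψ i) i v
            + (pDeriv ψ i v * (γ * v i * (1 + ‖v‖ ^ 2) ^ (-1 : ℝ))
               + ψ v * ((γ * 1) * (1 + ‖v‖ ^ 2) ^ (-1 : ℝ)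
                  + γ * v i * ((-1) * (1 + ‖v‖ ^ 2) ^ (-1 - 1 : ℝ) * (2 * v i))))) := by
  have dψ : DifferentiableAt ℝ ψ v := (hψ.differentiable (by simp)) v
  have dP : DifferentiableAt ℝ (pDeriv ψ i) v :=
    ((contDiff_pDeriv ψ hψ i).differentiable (by simp)) v
  have dco : DifferentiableAt ℝ (fun w : E => w i) v :=
    ((EuclideanSpace.proj (𝕜 := ℝ) i).differentiable) v
  have dγco : DifferentiableAt ℝ (fun w : E => γ * w i) v := dco.const_mul γ
  have drp : DifferentiableAt ℝ (fun w : E => (1 + ‖w‖ ^ 2) ^ (-1 : ℝ)) v :=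
    ((hasFDerivAt_one_add_normSq v).rpow_const (Or.inl (by positivity))).differentiableAt
  have db : DifferentiableAt ℝ (fun w : E => γ * w i * (1 + ‖w‖ ^ 2) ^ (-1 : ℝ)) v :=
    dγco.mul drp
  have dψb : DifferentiableAt ℝ (fun w : E => ψ w * (γ * w i * (1 + ‖w‖ ^ 2) ^ (-1 : ℝ))) v :=
    dψ.mul db
  show pDeriv (fun w => ψ w * (pDeriv ψ i w + ψ w * (γ * w i * (1 + ‖w‖ ^ 2) ^ (-1 : ℝ)))) i v = _
  rw [pDeriv_fun_mul (g := fun w => pDeriv ψ i w + ψ w * (γ * w i * (1 + ‖w‖ ^ 2) ^ (-1 : ℝ)))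
      dψ (dP.add dψb), pDeriv_fun_add dP dψb, pDeriv_fun_mul dψ db,
    pDeriv_fun_mul dγco drp, pDeriv_rpow, pDeriv_const_mul γ dco, pDeriv_coord]

lemma sum_algebra (n : ℕ) (γ q S A B C : ℝ) (hq : q ≠ 0) (P Q X : Fin n → ℝ)
    (hA : A = ∑ i, P i ^ 2) (hB : B = ∑ i, X i * P i) (hC : C = ∑ i, Q i)
    (hX : ∑ i, X i ^ 2 = q - 1) :
    (∑ i, (P i + S * (γ * X i * q⁻¹)) ^ 2) + γ * (γ + 2) / q ^ 2 * S ^ 2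
      = (-C + γ * (γ - n + 2) / q * S) * S
        + ∑ i, (P i * (P i + S * (γ * X i * q⁻¹))
            + S * (Q i + (P i * (γ * X i * q⁻¹)
                + S * ((γ * 1) * q⁻¹ + γ * X i * ((-1) * (q ^ 2)⁻¹ * (2 * X i)))))) := by
  have e1 : ∑ i, (P i + S * (γ * X i * q⁻¹)) ^ 2
      = ∑ i, (P i ^ 2 + ((2 * γ * S * q⁻¹) * (X i * P i)
          + (γ * S * q⁻¹) ^ 2 * X i ^ 2)) :=
    Finset.sum_congr rfl fun i _ => by ring
  have e2 : ∑ i, (P i * (P i + S * (γ * X i * q⁻¹))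
            + S * (Q i + (P i * (γ * X i * q⁻¹)
                + S * ((γ * 1) * q⁻¹ + γ * X i * ((-1) * (q ^ 2)⁻¹ * (2 * X i))))))
      = ∑ i, (P i ^ 2 + ((2 * γ * S * q⁻¹) * (X i * P i)
          + (S * Q i + (γ * S ^ 2 * q⁻¹ + (-(2 * γ * S ^ 2 * (q ^ 2)⁻¹)) * X i ^ 2)))) :=
    Finset.sum_congr rfl fun i _ => by ring
  rw [e1, e2]
  simp only [Finset.sum_add_distrib, ← Finset.mul_sum, Finset.sum_const, Finset.card_univ,
    Fintype.card_fin, nsmul_eq_mul, ← hA, ← hB, ← hC, hX]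
  field_simp
  ring

end Aux

theorem stmt3 (d : ℕ) (hd : 1 ≤ d) (γ : ℝ) (hγ : (d : ℝ) / 2 < γ)
    (M : EuclideanSpace ℝ (Fin d) → ℝ)
    (hM : ∀ v, M v = (1 + ‖v‖ ^ 2) ^ (-(γ / 2)))
    (ψ : EuclideanSpace ℝ (Fin d) → ℝ)
    (hψ : ContDiff ℝ (⊤ : ℕ∞) ψ) (hc : HasCompactSupport ψ) :
    (∫ v, (-(lap ψ v) + (γ * (γ - d + 2) / (1 + ‖v‖ ^ 2)) * ψ v) * ψ v)
      = (∫ v, ((∑ i, (pDeriv (fun w => ψ w / M w) i v) ^ 2) * (M v) ^ 2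
          + (γ * (γ + 2) / (1 + ‖v‖ ^ 2) ^ 2) * (ψ v) ^ 2))
    ∧ 0 ≤ ∫ v, (-(lap ψ v) + (γ * (γ - d + 2) / (1 + ‖v‖ ^ 2)) * ψ v) * ψ v := by
  have hd1 : (1 : ℝ) ≤ d := by exact_mod_cast hd
  have hγ0 : 0 < γ := by nlinarith
  have hqpos : ∀ v : EuclideanSpace ℝ (Fin d), (0:ℝ) < 1 + ‖v‖ ^ 2 := fun v => by positivity
  -- rewrite ψ/M
  have hdivM : (fun w => ψ w / M w)
      = fun w : EuclideanSpace ℝ (Fin d) => ψ w * (1 + ‖w‖ ^ 2) ^ (γ / 2) := by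
    funext w
    rw [div_eq_mul_inv, hM w, Real.rpow_neg (hqpos w).le, inv_inv]
  -- the key pointwise identity
  have key : ∀ v : EuclideanSpace ℝ (Fin d),
      ((∑ i, (pDeriv (fun w => ψ w / M w) i v) ^ 2) * (M v) ^ 2
          + (γ * (γ + 2) / (1 + ‖v‖ ^ 2) ^ 2) * (ψ v) ^ 2)
        = (-(lap ψ v) + (γ * (γ - d + 2) / (1 + ‖v‖ ^ 2)) * ψ v) * ψ v
          + ∑ i, pDeriv (Ffun γ ψ i) i v := by
    intro v
    have hq := hqpos v
    have hq' : (1:ℝ) + ‖v‖ ^ 2 ≠ 0 := hq.ne'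
    -- derivative of ψ/M
    have h1 : ∀ i, pDeriv (fun w => ψ w / M w) i v
        = (1 + ‖v‖ ^ 2) ^ (γ / 2)
          * (pDeriv ψ i v + ψ v * (γ * v i * (1 + ‖v‖ ^ 2) ^ (-1 : ℝ))) := by
      intro i
      have dψ : DifferentiableAt ℝ ψ v := (hψ.differentiable (by simp)) v
      have drp : DifferentiableAt ℝ
          (fun w : EuclideanSpace ℝ (Fin d) => (1 + ‖w‖ ^ 2) ^ (γ / 2)) v :=
        ((hasFDerivAt_one_add_normSq v).rpow_const (Or.inl hq')).differentiableAt
      rw [hdivM, pDeriv_fun_mul dψ drp, pDeriv_rpow]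
      have e1 : (1 + ‖v‖ ^ 2) ^ (γ / 2 - 1)
          = (1 + ‖v‖ ^ 2) ^ (γ / 2) * (1 + ‖v‖ ^ 2) ^ (-1 : ℝ) := by
        rw [← Real.rpow_add hq]; ring_nf
      rw [e1]; ring
    have hMM : ((1 + ‖v‖ ^ 2) ^ (γ / 2)) ^ 2 * (M v) ^ 2 = 1 := by
      rw [hM v, ← mul_pow, ← Real.rpow_add hq, add_neg_cancel, Real.rpow_zero, one_pow]
    have h2 : (∑ i, (pDeriv (fun w => ψ w / M w) i v) ^ 2) * (M v) ^ 2
        = ∑ i, (pDeriv ψ i v + ψ v * (γ * v i * (1 + ‖v‖ ^ 2) ^ (-1 : ℝ))) ^ 2 := by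
      simp_rw [h1, mul_pow, ← Finset.mul_sum]
      rw [show (((1 + ‖v‖ ^ 2) ^ (γ / 2)) ^ 2
          * ∑ i, (pDeriv ψ i v + ψ v * (γ * v i * (1 + ‖v‖ ^ 2) ^ (-1:ℝ))) ^ 2) * (M v) ^ 2
        = (((1 + ‖v‖ ^ 2) ^ (γ / 2)) ^ 2 * (M v) ^ 2)
          * ∑ i, (pDeriv ψ i v + ψ v * (γ * v i * (1 + ‖v‖ ^ 2) ^ (-1:ℝ))) ^ 2 from by ring,
        hMM, one_mul]
    have hX : ∑ i, (v i) ^ 2 = (1 + ‖v‖ ^ 2) - 1 := by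
      rw [add_sub_cancel_left, EuclideanSpace.norm_sq_eq]
      simp
    have hlap : lap ψ v = ∑ i, pDeriv (pDeriv ψ i) i v := rfl
    rw [h2, hlap]
    simp_rw [pDeriv_Ffun γ hψ, Real.rpow_neg_one,
      show (-1 - 1 : ℝ) = -(2:ℕ) by norm_num, Real.rpow_neg hq.le, Real.rpow_natCast]
    exact sum_algebra d γ (1 + ‖v‖ ^ 2) (ψ v) _ _ _ hq' (fun i => pDeriv ψ i v)
      (fun i => pDeriv (pDeriv ψ i) i v) (fun i => v i) rfl rfl rfl hX
  -- integrability
  have hLc : Continuous fun v => (-(lap ψ v) + (γ * (γ - d + 2) / (1 + ‖v‖ ^ 2)) * ψ v) * ψ v := by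
    have hlapc : Continuous (lap (d := d) ψ) := by
      apply continuous_finset_sum
      intro i _
      exact (contDiff_pDeriv _ (contDiff_pDeriv ψ hψ i) i).continuous
    have : Continuous fun v : EuclideanSpace ℝ (Fin d) =>
        γ * (γ - d + 2) / (1 + ‖v‖ ^ 2) := by
      apply Continuous.div continuous_const (by fun_prop)
      exact fun v => (hqpos v).ne'
    exact (hlapc.neg.add (this.mul hψ.continuous)).mul hψ.continuous
  have hLs : HasCompactSupport
      fun v => (-(lap ψ v) + (γ * (γ - d + 2) / (1 + ‖v‖ ^ 2)) * ψ v) * ψ v :=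
    hc.mul_left
  have hLint : Integrable
      (fun v => (-(lap ψ v) + (γ * (γ - d + 2) / (1 + ‖v‖ ^ 2)) * ψ v) * ψ v) :=
    hLc.integrable_of_hasCompactSupport hLs
  have hDint : ∀ i, Integrable (fun v => pDeriv (Ffun γ ψ i) i v) := fun i =>
    (contDiff_pDeriv _ (contDiff_Ffun γ hψ i) i).continuous.integrable_of_hasCompactSupport
      (hasCompactSupport_pDeriv (hasCompactSupport_Ffun γ hc i) i)
  have h2 : (∫ v, ((∑ i, (pDeriv (fun w => ψ w / M w) i v) ^ 2) * (M v) ^ 2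
          + (γ * (γ + 2) / (1 + ‖v‖ ^ 2) ^ 2) * (ψ v) ^ 2))
      = ∫ v, (-(lap ψ v) + (γ * (γ - d + 2) / (1 + ‖v‖ ^ 2)) * ψ v) * ψ v := by
    rw [show (fun v => ((∑ i, (pDeriv (fun w => ψ w / M w) i v) ^ 2) * (M v) ^ 2
          + (γ * (γ + 2) / (1 + ‖v‖ ^ 2) ^ 2) * (ψ v) ^ 2))
        = fun v => ((-(lap ψ v) + (γ * (γ - d + 2) / (1 + ‖v‖ ^ 2)) * ψ v) * ψ v
            + ∑ i, pDeriv (Ffun γ ψ i) i v) from funext key]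
    rw [integral_add hLint (integrable_finset_sum _ fun i _ => hDint i),
      integral_finset_sum _ fun i _ => hDint i]
    rw [Finset.sum_eq_zero fun i _ =>
      integral_pDeriv_eq_zero (contDiff_Ffun γ hψ i) (hasCompactSupport_Ffun γ hc i) i, add_zero]
  refine ⟨h2.symm, ?_⟩
  rw [← h2]
  apply integral_nonneg
  intro v
  apply add_nonneg
  · exact mul_nonneg (Finset.sum_nonneg fun i _ => sq_nonneg _) (sq_nonneg _)
  · exact mul_nonneg (div_nonneg (by nlinarith) (by positivity)) (sq_nonneg _)

end
end

section
/- Let d ≥ 1, d/2 < γ < (d+4)/2, M(v) = (1+|v|²)^{-γ/2}, η ≥ 0. For ψ ∈ C_c^∞(ℝ^d,ℂ), define ‖ψ‖²_{H̃_η} = ∫|∇_v(ψ/M)|²M² dv + ∫ (γ(γ+2)⟨v⟩^{-4})|ψ|² dv + η∫|v₁||ψ|² dv and ‖ψ‖²_{H_η} = ∫|∇_vψ|² dv + ∫|ψ|²⟨v⟩^{-2} dv + η∫|v₁||ψ|² dv. Then there exist constants C₁, C₂ > 0 depending only on γ and d (not on η) such that C₁‖ψ‖_{H̃_η} ≤ ‖ψ‖_{H_η}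 ≤ C₂‖ψ‖_{H̃_η} for all ψ. -/
open MeasureTheory Real

noncomputable section

set_option maxHeartbeats 1000000

namespace Stmt7Aux

variable {d : ℕ}
local notation "V" => EuclideanSpace ℝ (Fin d)

lemma spos (v : V) : (0:ℝ) < 1 + ‖v‖ ^ 2 := by positivity

def W (β : ℝ) (v : EuclideanSpace ℝ (Fin d)) : ℝ := (1 + ‖v‖ ^ 2) ^ β

lemma W_pos (β : ℝ) (v : V) : 0 < W β v := rpow_pos_of_pos (spos v) β

lemma W_mul (a b : ℝ) (v : V) : W a v * W b v = W (a + b) v :=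
  (Real.rpow_add (spos v) a b).symm

lemma contDiff_W (β : ℝ) : ContDiff ℝ (⊤ : ℕ∞) (W (d := d) β) := by
  rw [contDiff_iff_contDiffAt]
  intro v
  exact ContDiffAt.rpow_const_of_ne
    ((contDiff_const.add (contDiff_norm_sq ℝ)).contDiffAt) (spos v).ne'

lemma normsq_decomp (z : ℂ) : ‖z‖ ^ 2 = z.re ^ 2 + z.im ^ 2 := by
  rw [← Complex.normSq_eq_norm_sq, Complex.normSq_apply]; ring

lemma normsq_coords (v : V) : ‖v‖ ^ 2 = ∑ i, (v i) ^ 2 := by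
  rw [EuclideanSpace.norm_eq, Real.sq_sqrt (Finset.sum_nonneg fun i _ => sq_nonneg _)]
  simp [Real.norm_eq_abs, sq_abs]

lemma hasFDerivAt_W (β : ℝ) (v : V) :
    HasFDerivAt (W β) ((β * (1 + ‖v‖ ^ 2) ^ (β - 1)) • (2 • (innerSL ℝ v))) v := by
  have h1 : HasDerivAt (fun x : ℝ => x ^ β) (β * (1 + ‖v‖ ^ 2) ^ (β - 1)) (1 + ‖v‖ ^ 2) := by
    simpa [mul_comm] using Real.hasDerivAt_rpow_const (x := 1 + ‖v‖ ^ 2) (p := β)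
      (Or.inl (spos v).ne')
  exact h1.comp_hasFDerivAt (f := fun v : V => 1 + ‖v‖ ^ 2) v (by simpa using ((hasFDerivAt_id v).norm_sq).const_add 1)

lemma pDeriv_W (β : ℝ) (i : Fin d) (v : V) :
    pDeriv (W β) i v = 2 * β * W (β - 1) v * v i := by
  rw [pDeriv, (hasFDerivAt_W β v).fderiv]
  simp [EuclideanSpace.inner_single_right, real_inner_comm, W]
  ring

lemma contDiff_proj (i : Fin d) : ContDiff ℝ (⊤ : ℕ∞) (fun v : V => v i) :=
  (EuclideanSpace.proj (𝕜 := ℝ) i).contDiff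

lemma contDiff_Fi (β : ℝ) (i : Fin d) : ContDiff ℝ (⊤ : ℕ∞) (fun v : V => v i * W β v) :=
  (contDiff_proj i).mul (contDiff_W β)

lemma pDeriv_Fi (β : ℝ) (i : Fin d) (v : V) :
    pDeriv (fun v : V => v i * W β v) i v = W β v + 2 * β * W (β - 1) v * (v i) ^ 2 := by
  rw [pDeriv, fderiv_fun_mul (((contDiff_proj i).differentiable (by simp)) v)
    (((contDiff_W β).differentiable (by simp)) v)]
  have hproj : fderiv ℝ (fun v : V => v i) v = EuclideanSpace.proj (𝕜 := ℝ) i :=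
    (EuclideanSpace.proj (𝕜 := ℝ) i).fderiv
  have hp : fderiv ℝ (fun v : V => v i) v (EuclideanSpace.single i 1) = 1 := by
    rw [hproj]; simp
  have hw : fderiv ℝ (W β) v (EuclideanSpace.single i 1) = 2 * β * W (β - 1) v * v i :=
    pDeriv_W β i v
  simp [hp, hw]
  ring

/-- integral of a directional derivative of a compactly supported function vanishes -/
theorem L0 (g : V → ℝ) (hg : ContDiff ℝ (⊤ : ℕ∞) g) (hgs : HasCompactSupport g) (u : V) :
    ∫ v, fderiv ℝ g v u = 0 := by
  obtain ⟨C, hC⟩ := hg.lipschitzWith_of_hasCompactSupport hgs (by simp)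
  have h := LipschitzWith.integral_lineDeriv_mul_eq (μ := volume)
    (LipschitzWith.const (1 : ℝ)) hC hgs u
  have h1 : ∀ x : V, lineDeriv ℝ (fun _ : V => (1:ℝ)) x u = 0 := by
    intro x
    have : DifferentiableAt ℝ (fun _ : V => (1:ℝ)) x := differentiableAt_const _
    rw [this.lineDeriv_eq_fderiv]; simp
  have h2 : ∀ x : V, lineDeriv ℝ g x (-u) = - fderiv ℝ g x u := by
    intro x
    have hd : DifferentiableAt ℝ g x := (hg.differentiable (by simp)) x
    rw [hd.lineDeriv_eq_fderiv]; simp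
  simp only [h1, h2, zero_mul, integral_zero, mul_one] at h
  have := h.symm
  rw [integral_neg] at this
  linarith [this]

lemma continuous_pDeriv {G : Type*} [NormedAddCommGroup G] [NormedSpace ℝ G]
    {f : V → G} (hf : ContDiff ℝ (⊤ : ℕ∞) f) (i : Fin d) : Continuous (pDeriv f i) :=
  (hf.continuous_fderiv (by simp)).clm_apply continuous_const

lemma hasCompactSupport_pDeriv {G : Type*} [NormedAddCommGroup G] [NormedSpace ℝ G]
    {f : V → G} (hf : HasCompactSupport f) (i : Fin d) : HasCompactSupport (pDeriv f i) := by
  have h := hf.fderiv ℝ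
  exact h.comp_left (g := fun L : (EuclideanSpace ℝ (Fin d)) →L[ℝ] G =>
    L (EuclideanSpace.single i 1)) rfl

/-- integration by parts -/
theorem ibp {g f : V → ℝ} (hg : ContDiff ℝ (⊤ : ℕ∞) g) (hgs : HasCompactSupport g)
    (hf : ContDiff ℝ (⊤ : ℕ∞) f) (i : Fin d) :
    ∫ v, pDeriv g i v * f v = - ∫ v, g v * pDeriv f i v := by
  have h0 := L0 (fun v => g v * f v) (hg.mul hf) (hgs.mul_right) (EuclideanSpace.single i 1)
  have hprod : ∀ v : V, fderiv ℝ (fun v => g v * f v) v (EuclideanSpace.single i 1)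
      = g v * pDeriv f i v + pDeriv g i v * f v := by
    intro v
    rw [fderiv_fun_mul ((hg.differentiable (by simp)) v) ((hf.differentiable (by simp)) v)]
    simp [pDeriv]
    ring
  rw [show (fun v : V => fderiv ℝ (fun v => g v * f v) v (EuclideanSpace.single i 1))
      = fun v => g v * pDeriv f i v + pDeriv g i v * f v from funext hprod] at h0
  have hi1 : Integrable (fun v : V => g v * pDeriv f i v) :=
    (hg.continuous.mul (continuous_pDeriv hf i)).integrable_of_hasCompactSupport hgs.mul_right
  have hi2 : Integrable (fun v : V => pDeriv g i v * f v) :=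
    ((continuous_pDeriv hg i).mul hf.continuous).integrable_of_hasCompactSupport
      ((hasCompactSupport_pDeriv hgs i).mul_right)
  rw [integral_add hi1 hi2] at h0
  linarith

def phi (γ : ℝ) (ψ : EuclideanSpace ℝ (Fin d) → ℂ) (v : EuclideanSpace ℝ (Fin d)) : ℂ :=
  ψ v * ((W (γ/2) v : ℝ) : ℂ)

def gg (γ : ℝ) (ψ : EuclideanSpace ℝ (Fin d) → ℂ) (v : EuclideanSpace ℝ (Fin d)) : ℝ :=
  ‖phi γ ψ v‖ ^ 2

section psi
variable {γ : ℝ} {ψ : EuclideanSpace ℝ (Fin d) → ℂ}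

lemma phi_eq_div (v : V) : ψ v / ((W (-(γ/2)) v : ℝ) : ℂ) = phi γ ψ v := by
  rw [phi, W, W, div_eq_mul_inv, ← Complex.ofReal_inv, ← Real.rpow_neg (spos v).le, neg_neg]

lemma psi_eq (v : V) : ψ v = phi γ ψ v * ((W (-(γ/2)) v : ℝ) : ℂ) := by
  rw [phi, W, W, mul_assoc, ← Complex.ofReal_mul, ← Real.rpow_add (spos v)]
  norm_num

lemma contDiff_phi (hψ : ContDiff ℝ (⊤ : ℕ∞) ψ) : ContDiff ℝ (⊤ : ℕ∞) (phi γ ψ) :=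
  hψ.mul (Complex.ofRealCLM.contDiff.comp (contDiff_W _))

lemma hcs_phi (hψs : HasCompactSupport ψ) : HasCompactSupport (phi γ ψ) := by
  apply hψs.mono
  intro v hv
  simp only [Function.mem_support] at hv ⊢
  intro h0
  exact hv (by rw [phi, h0, zero_mul])

lemma contDiff_gg (hψ : ContDiff ℝ (⊤ : ℕ∞) ψ) : ContDiff ℝ (⊤ : ℕ∞) (gg γ ψ) :=
  (contDiff_phi hψ).norm_sq ℝ

lemma hcs_gg (hψs : HasCompactSupport ψ) : HasCompactSupport (gg γ ψ) := by
  apply (hcs_phi hψs).mono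
  intro v hv
  simp only [Function.mem_support] at hv ⊢
  intro h0
  exact hv (by rw [gg, h0]; simp)

lemma gg_nonneg (v : V) : 0 ≤ gg γ ψ v := sq_nonneg _

lemma gg_decomp (v : V) : gg γ ψ v = (phi γ ψ v).re ^ 2 + (phi γ ψ v).im ^ 2 :=
  normsq_decomp _

lemma pDeriv_gg (hψ : ContDiff ℝ (⊤ : ℕ∞) ψ) (i : Fin d) (v : V) :
    pDeriv (gg γ ψ) i v
      = 2 * ((phi γ ψ v).re * (pDeriv (phi γ ψ) i v).re
        + (phi γ ψ v).im * (pDeriv (phi γ ψ) i v).im) := by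
  have hD : HasFDerivAt (phi γ ψ) (fderiv ℝ (phi γ ψ) v) v :=
    (((contDiff_phi hψ).differentiable (by simp)) v).hasFDerivAt
  rw [show gg γ ψ = fun v => ‖phi γ ψ v‖ ^ 2 from rfl, pDeriv]
  rw [hD.norm_sq.fderiv]
  simp [Complex.inner, Complex.mul_re, pDeriv]
  ring

lemma pDeriv_psi (hψ : ContDiff ℝ (⊤ : ℕ∞) ψ) (i : Fin d) (v : V) :
    pDeriv ψ i v = ((W (-(γ/2)) v : ℝ) : ℂ) * pDeriv (phi γ ψ) i v
      + ((pDeriv (W (-(γ/2))) i v : ℝ) : ℂ) * phi γ ψ v := by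
  have hψ' : ψ = fun v => phi γ ψ v * ((W (-(γ/2)) v : ℝ) : ℂ) := funext fun v => psi_eq v
  have hφ : ContDiff ℝ (⊤ : ℕ∞) (phi γ ψ) := contDiff_phi hψ
  have hc : ContDiff ℝ (⊤ : ℕ∞) (W (d := d) (-(γ/2))) := contDiff_W _
  conv_lhs => rw [pDeriv, hψ']
  have hdc : HasFDerivAt (fun v : V => ((W (-(γ/2)) v : ℝ) : ℂ))
      (Complex.ofRealCLM.comp (fderiv ℝ (W (-(γ/2))) v)) v :=
    Complex.ofRealCLM.hasFDerivAt.comp v ((hc.differentiable (by simp)) v).hasFDerivAt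
  rw [fderiv_fun_mul ((hφ.differentiable (by simp)) v) hdc.differentiableAt]
  simp [hdc.fderiv, pDeriv]
  ring

lemma keyid (hψ : ContDiff ℝ (⊤ : ℕ∞) ψ) (i : Fin d) (v : V) :
    ‖pDeriv ψ i v‖ ^ 2
      = ‖pDeriv (phi γ ψ) i v‖ ^ 2 * W (-γ) v
        + γ ^ 2 * (gg γ ψ v * ((v i) ^ 2 * W (-γ - 2) v))
        - γ * (pDeriv (gg γ ψ) i v * (v i * W (-γ - 1) v)) := by
  have hW := pDeriv_W (-(γ/2)) i v
  rw [pDeriv_psi hψ i v, hW, normsq_decomp, normsq_decomp, gg_decomp, pDeriv_gg hψ i v]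
  have haa : W (-γ) v = W (-(γ/2)) v * W (-(γ/2)) v := by rw [W_mul]; ring_nf
  have hbb : W (-γ - 2) v = W (-(γ/2) - 1) v * W (-(γ/2) - 1) v := by rw [W_mul]; ring_nf
  have hab : W (-γ - 1) v = W (-(γ/2)) v * W (-(γ/2) - 1) v := by rw [W_mul]; ring_nf
  rw [haa, hbb, hab]
  simp only [Complex.add_re, Complex.add_im, Complex.mul_re, Complex.mul_im,
    Complex.ofReal_re, Complex.ofReal_im]
  ring

lemma keybound (hψ : ContDiff ℝ (⊤ : ℕ∞) ψ) (lam : ℝ) (hlam : 0 < lam) (v : V) :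
    ∑ i, pDeriv (gg γ ψ) i v * (v i * W (-γ - 1) v)
      ≤ lam * ((∑ i, ‖pDeriv (phi γ ψ) i v‖ ^ 2) * W (-γ) v)
        + (1/lam) * (gg γ ψ v * W (-γ - 1) v) := by
  have hCS : (∑ i, pDeriv (gg γ ψ) i v * v i) ^ 2
      ≤ (∑ i, (pDeriv (gg γ ψ) i v) ^ 2) * ∑ i, (v i) ^ 2 :=
    Finset.sum_mul_sq_le_sq_mul_sq _ _ _
  have hsum_sq : ∑ i, (pDeriv (gg γ ψ) i v) ^ 2
      ≤ 4 * gg γ ψ v * ∑ i, ‖pDeriv (phi γ ψ) i v‖ ^ 2 := by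
    have h : ∀ i : Fin d, (pDeriv (gg γ ψ) i v) ^ 2
        ≤ 4 * gg γ ψ v * ‖pDeriv (phi γ ψ) i v‖ ^ 2 := by
      intro i
      rw [pDeriv_gg hψ i v, gg_decomp, normsq_decomp]
      nlinarith [sq_nonneg ((phi γ ψ v).re * (pDeriv (phi γ ψ) i v).im
        - (phi γ ψ v).im * (pDeriv (phi γ ψ) i v).re)]
    calc ∑ i, (pDeriv (gg γ ψ) i v) ^ 2
        ≤ ∑ i, 4 * gg γ ψ v * ‖pDeriv (phi γ ψ) i v‖ ^ 2 :=
          Finset.sum_le_sum fun i _ => h i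
      _ = 4 * gg γ ψ v * ∑ i, ‖pDeriv (phi γ ψ) i v‖ ^ 2 := by rw [Finset.mul_sum]
  have hvsq : ∑ i, (v i) ^ 2 ≤ 1 + ‖v‖ ^ 2 := by
    rw [← normsq_coords]; linarith
  -- abbreviate, with opaque values
  obtain ⟨T, hT⟩ : ∃ T, T = ∑ i, ‖pDeriv (phi γ ψ) i v‖ ^ 2 := ⟨_, rfl⟩
  obtain ⟨G, hG⟩ : ∃ G, G = gg γ ψ v := ⟨_, rfl⟩
  obtain ⟨L, hL⟩ : ∃ L, L = ∑ i, pDeriv (gg γ ψ) i v * v i := ⟨_, rfl⟩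
  obtain ⟨s, hs⟩ : ∃ s, s = (1:ℝ) + ‖v‖ ^ 2 := ⟨_, rfl⟩
  obtain ⟨w0, hw0⟩ : ∃ w0, w0 = W (-γ) v := ⟨_, rfl⟩
  obtain ⟨w1, hw1⟩ : ∃ w1, w1 = W (-γ - 1) v := ⟨_, rfl⟩
  have hT0 : 0 ≤ T := hT ▸ Finset.sum_nonneg fun i _ => sq_nonneg _
  have hG0 : 0 ≤ G := hG ▸ gg_nonneg v
  have hw00 : 0 < w0 := hw0 ▸ W_pos _ v
  have hw10 : 0 < w1 := hw1 ▸ W_pos _ v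
  have hs0 : (0:ℝ) < s := hs ▸ spos v
  have hsum2 : ∑ i, (pDeriv (gg γ ψ) i v) ^ 2 ≤ 4 * G * T := by
    rw [hG, hT]; exact hsum_sq
  have hWW : w1 * w1 * s = w0 * w1 := by
    have h1 : w1 * s = w0 := by
      rw [hw1, hw0, hs]
      have h2 : (1:ℝ) + ‖v‖ ^ 2 = W 1 v := (Real.rpow_one _).symm
      rw [h2, W_mul]; ring_nf
    calc w1 * w1 * s = w1 * (w1 * s) := by ring
      _ = w1 * w0 := by rw [h1]
      _ = w0 * w1 := by ring
  have hgoal : L * w1 ≤ lam * (T * w0) + (1/lam) * (G * w1) := by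
    have hL2 : L ^ 2 ≤ 4 * G * T * s := by
      have hvs' : ∑ i, (v i) ^ 2 ≤ s := hs ▸ hvsq
      have hv2nn : (0:ℝ) ≤ ∑ i, (v i) ^ 2 := Finset.sum_nonneg fun i _ => sq_nonneg _
      have hsum2nn : (0:ℝ) ≤ ∑ i, (pDeriv (gg γ ψ) i v) ^ 2 :=
        Finset.sum_nonneg fun i _ => sq_nonneg _
      have := hL ▸ hCS
      nlinarith [this, hsum2, hvs', hv2nn, hsum2nn, hT0, hG0]
    have hLW2 : (L * w1) ^ 2 ≤ 4 * (T * w0) * (G * w1) := by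
      have : (L * w1) ^ 2 = L ^ 2 * (w1 * w1) := by ring
      rw [this]
      calc L ^ 2 * (w1 * w1) ≤ (4 * G * T * s) * (w1 * w1) := by
            apply mul_le_mul_of_nonneg_right hL2 (by positivity)
        _ = 4 * (T * (w1 * w1 * s)) * G := by ring
        _ = 4 * (T * (w0 * w1)) * G := by rw [hWW]
        _ = 4 * (T * w0) * (G * w1) := by ring
    have hP0 : 0 ≤ T * w0 := by positivity
    have hQ0 : 0 ≤ G * w1 := by positivity
    have hmul : lam * (1/lam) = 1 := by field_simp
    have hR0 : 0 ≤ lam * (T * w0) + (1/lam) * (G * w1) := by positivity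
    have hsq : (L * w1) ^ 2 ≤ (lam * (T * w0) + (1/lam) * (G * w1)) ^ 2 := by
      nlinarith [hLW2, sq_nonneg (lam * (T * w0) - (1/lam) * (G * w1)), hmul,
        mul_nonneg hP0 hQ0]
    nlinarith [hsq, hR0]
  have hLrw : ∑ i, pDeriv (gg γ ψ) i v * (v i * W (-γ - 1) v)
      = L * w1 := by
    rw [hL, hw1, Finset.sum_mul]
    exact Finset.sum_congr rfl fun i _ => by ring
  rw [hLrw, ← hT, ← hG, ← hw0, ← hw1]
  exact hgoal

lemma normsq_psi (v : V) : ‖ψ v‖ ^ 2 = gg γ ψ v * W (-γ) v := by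
  rw [psi_eq (γ := γ) (ψ := ψ) v, norm_mul, mul_pow, gg]
  congr 1
  rw [Complex.norm_real, Real.norm_eq_abs, abs_of_pos (W_pos _ v), sq,
    W_mul]
  congr 1
  ring

lemma convQ (v : V) : ‖ψ v‖ ^ 2 / (1 + ‖v‖ ^ 2) = gg γ ψ v * W (-γ - 1) v := by
  rw [normsq_psi (γ := γ) v, div_eq_mul_inv,
    show ((1:ℝ) + ‖v‖ ^ 2)⁻¹ = W (-1) v from by
      rw [W, Real.rpow_neg_one], mul_assoc, W_mul]
  congr 2
  try ring

lemma convB (v : V) : γ * (γ + 2) / (1 + ‖v‖ ^ 2) ^ 2 * ‖ψ v‖ ^ 2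
    = γ * (γ + 2) * (gg γ ψ v * W (-γ - 2) v) := by
  rw [normsq_psi (γ := γ) v]
  have h2 : ((1:ℝ) + ‖v‖ ^ 2) ^ (2:ℕ) = W 2 v := by
    rw [W, ← Real.rpow_natCast (1 + ‖v‖ ^ 2) 2]
    norm_num
  rw [h2, div_eq_mul_inv, show (W 2 v)⁻¹ = W (-2) v from by
    rw [W, W, ← Real.rpow_neg (spos v).le]]
  have h3 : W (-2) v * W (-γ) v = W (-γ - 2) v := by rw [W_mul]; congr 1; ring
  calc γ * (γ + 2) * W (-2) v * (gg γ ψ v * W (-γ) v)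
      = γ * (γ + 2) * (gg γ ψ v * (W (-2) v * W (-γ) v)) := by ring
    _ = γ * (γ + 2) * (gg γ ψ v * W (-γ - 2) v) := by rw [h3]

section integrals
variable (hψ : ContDiff ℝ (⊤ : ℕ∞) ψ) (hψs : HasCompactSupport ψ)

lemma cont_gg (hψ : ContDiff ℝ (⊤ : ℕ∞) ψ) : Continuous (gg γ ψ) := (contDiff_gg hψ).continuous

include hψ hψs

lemma intg_ggW (β : ℝ) : Integrable (fun v : V => gg γ ψ v * W β v) :=
  ((cont_gg hψ).mul (contDiff_W β).continuous).integrable_of_hasCompactSupport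
    ((hcs_gg hψs).mul_right)

lemma intg_ggW' (β : ℝ) (i : Fin d) :
    Integrable (fun v : V => gg γ ψ v * ((v i) ^ 2 * W β v)) :=
  ((cont_gg hψ).mul ((((contDiff_proj i).continuous).pow 2).mul
    (contDiff_W β).continuous)).integrable_of_hasCompactSupport ((hcs_gg hψs).mul_right)

lemma intg_I3 (i : Fin d) :
    Integrable (fun v : V => pDeriv (gg γ ψ) i v * (v i * W (-γ - 1) v)) :=
  ((continuous_pDeriv (contDiff_gg hψ) i).mul
    (((contDiff_proj i).continuous).mul (contDiff_W _).continuous)).integrable_of_hasCompactSupport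
    ((hasCompactSupport_pDeriv (hcs_gg hψs) i).mul_right)

lemma intg_A1 (i : Fin d) :
    Integrable (fun v : V => ‖pDeriv (phi γ ψ) i v‖ ^ 2 * W (-γ) v) := by
  apply Continuous.integrable_of_hasCompactSupport
  · exact (((continuous_pDeriv (contDiff_phi hψ) i).norm.pow 2).mul (contDiff_W _).continuous)
  · apply HasCompactSupport.mul_right
    exact ((hasCompactSupport_pDeriv (hcs_phi hψs) i).comp_left (g := fun z : ℂ => ‖z‖ ^ 2)
      (by simp))

lemma intg_A :
    Integrable (fun v : V => (∑ i, ‖pDeriv (phi γ ψ) i v‖ ^ 2) * W (-γ) v) := by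
  apply Continuous.integrable_of_hasCompactSupport
  · exact ((continuous_finset_sum _ fun i _ =>
      (continuous_pDeriv (contDiff_phi hψ) i).norm.pow 2).mul (contDiff_W _).continuous)
  · apply HasCompactSupport.mul_right
    exact (((hcs_phi hψs).fderiv ℝ).comp_left
      (g := fun L : (EuclideanSpace ℝ (Fin d)) →L[ℝ] ℂ =>
        ∑ i, ‖L (EuclideanSpace.single i 1)‖ ^ 2) (by simp))

lemma intg_P (i : Fin d) : Integrable (fun v : V => ‖pDeriv ψ i v‖ ^ 2) := by
  apply Continuous.integrable_of_hasCompactSupport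
  · exact ((continuous_pDeriv hψ i).norm.pow 2)
  · exact ((hasCompactSupport_pDeriv hψs i).comp_left (g := fun z : ℂ => ‖z‖ ^ 2) (by simp))

lemma ibpF (i : Fin d) :
    ∫ v, pDeriv (gg γ ψ) i v * (v i * W (-γ - 1) v)
      = -(∫ v, gg γ ψ v * W (-γ - 1) v)
        + (2 * γ + 2) * ∫ v, gg γ ψ v * ((v i) ^ 2 * W (-γ - 2) v) := by
  have h := ibp (g := gg γ ψ) (contDiff_gg (γ := γ) hψ) (hcs_gg (γ := γ) hψs)
    (contDiff_Fi (-γ - 1) i) i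
  have hpt : ∀ v : V, gg γ ψ v * pDeriv (fun v : V => v i * W (-γ - 1) v) i v
      = gg γ ψ v * W (-γ - 1) v + (-(2 * γ + 2)) * (gg γ ψ v * ((v i) ^ 2 * W (-γ - 2) v)) := by
    intro v
    rw [pDeriv_Fi]
    have he : W (-γ - 1 - 1) v = W (-γ - 2) v := by congr 1; ring
    rw [he]
    ring
  rw [h]
  rw [show (fun v : V => gg γ ψ v * pDeriv (fun v : V => v i * W (-γ - 1) v) i v)
      = fun v => gg γ ψ v * W (-γ - 1) v
        + (-(2 * γ + 2)) * (gg γ ψ v * ((v i) ^ 2 * W (-γ - 2) v)) from funext hpt]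
  rw [integral_add (intg_ggW hψ hψs _) ((intg_ggW' hψ hψs _ i).const_mul _),
    integral_const_mul]
  ring

lemma sum_sq_int :
    ∑ i, ∫ v, gg γ ψ v * ((v i) ^ 2 * W (-γ - 2) v)
      = (∫ v, gg γ ψ v * W (-γ - 1) v) - ∫ v, gg γ ψ v * W (-γ - 2) v := by
  rw [← integral_finset_sum _ (fun i _ => intg_ggW' hψ hψs _ i)]
  have hpt : ∀ v : V, ∑ i, gg γ ψ v * ((v i) ^ 2 * W (-γ - 2) v)
      = gg γ ψ v * W (-γ - 1) v - gg γ ψ v * W (-γ - 2) v := by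
    intro v
    have h0 : ∑ i, gg γ ψ v * ((v i) ^ 2 * W (-γ - 2) v)
        = gg γ ψ v * ((∑ i, (v i) ^ 2) * W (-γ - 2) v) := by
      conv_rhs => rw [Finset.sum_mul, Finset.mul_sum]
    rw [h0, ← normsq_coords]
    have h1 : (1 + ‖v‖ ^ 2) * W (-γ - 2) v = W (-γ - 1) v := by
      rw [show (1:ℝ) + ‖v‖ ^ 2 = W 1 v from (Real.rpow_one _).symm, W_mul]
      congr 1
      ring
    rw [show gg γ ψ v * (‖v‖ ^ 2 * W (-γ - 2) v)
        = gg γ ψ v * ((1 + ‖v‖ ^ 2) * W (-γ - 2) v) - gg γ ψ v * W (-γ - 2) v from by ring, h1]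
  rw [show (fun v : V => ∑ i, gg γ ψ v * ((v i) ^ 2 * W (-γ - 2) v))
      = fun v => gg γ ψ v * W (-γ - 1) v - gg γ ψ v * W (-γ - 2) v from funext hpt]
  exact integral_sub (intg_ggW hψ hψs _) (intg_ggW hψ hψs _)

lemma sum_ibp :
    ∑ i, ∫ v, pDeriv (gg γ ψ) i v * (v i * W (-γ - 1) v)
      = (2 * γ + 2 - (d:ℝ)) * (∫ v, gg γ ψ v * W (-γ - 1) v)
        - (2 * γ + 2) * ∫ v, gg γ ψ v * W (-γ - 2) v := by
  have h : ∀ i : Fin d, ∫ v, pDeriv (gg γ ψ) i v * (v i * W (-γ - 1) v)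
      = -(∫ v, gg γ ψ v * W (-γ - 1) v)
        + (2 * γ + 2) * ∫ v, gg γ ψ v * ((v i) ^ 2 * W (-γ - 2) v) :=
    fun i => ibpF hψ hψs i
  rw [Finset.sum_congr rfl (fun i _ => h i), Finset.sum_add_distrib,
    Finset.sum_const, ← Finset.mul_sum, sum_sq_int hψ hψs]
  simp only [Finset.card_univ, Fintype.card_fin, nsmul_eq_mul]
  ring

lemma sumA :
    ∑ i, ∫ v, ‖pDeriv (phi γ ψ) i v‖ ^ 2 * W (-γ) v
      = ∫ v, (∑ i, ‖pDeriv (phi γ ψ) i v‖ ^ 2) * W (-γ) v := by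
  rw [← integral_finset_sum _ (fun i _ => intg_A1 hψ hψs i)]
  congr 1
  funext v
  rw [Finset.sum_mul]

lemma E1 : ∫ v, ∑ i, ‖pDeriv ψ i v‖ ^ 2
    = (∫ v, (∑ i, ‖pDeriv (phi γ ψ) i v‖ ^ 2) * W (-γ) v)
      - (γ * (γ + 2 - (d:ℝ))) * (∫ v, gg γ ψ v * W (-γ - 1) v)
      + (γ * (γ + 2)) * ∫ v, gg γ ψ v * W (-γ - 2) v := by
  rw [integral_finset_sum _ (fun i _ => intg_P hψ hψs i)]
  have hterm : ∀ i : Fin d, ∫ v, ‖pDeriv ψ i v‖ ^ 2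
      = (∫ v, ‖pDeriv (phi γ ψ) i v‖ ^ 2 * W (-γ) v)
        + γ ^ 2 * (∫ v, gg γ ψ v * ((v i) ^ 2 * W (-γ - 2) v))
        - γ * ∫ v, pDeriv (gg γ ψ) i v * (v i * W (-γ - 1) v) := by
    intro i
    rw [show (fun v : V => ‖pDeriv ψ i v‖ ^ 2)
        = fun v => ‖pDeriv (phi γ ψ) i v‖ ^ 2 * W (-γ) v
          + γ ^ 2 * (gg γ ψ v * ((v i) ^ 2 * W (-γ - 2) v))
          - γ * (pDeriv (gg γ ψ) i v * (v i * W (-γ - 1) v))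
      from funext fun v => keyid hψ i v]
    have hadd : Integrable (fun v : V => ‖pDeriv (phi γ ψ) i v‖ ^ 2 * W (-γ) v
        + γ ^ 2 * (gg γ ψ v * ((v i) ^ 2 * W (-γ - 2) v))) :=
      (intg_A1 hψ hψs i).add ((intg_ggW' hψ hψs _ i).const_mul _)
    rw [integral_sub hadd ((intg_I3 hψ hψs i).const_mul _),
      integral_add (intg_A1 hψ hψs i) ((intg_ggW' hψ hψs _ i).const_mul _),
      integral_const_mul, integral_const_mul]
  calc ∑ i, ∫ v, ‖pDeriv ψ i v‖ ^ 2
      = ∑ i, ((∫ v, ‖pDeriv (phi γ ψ) i v‖ ^ 2 * W (-γ) v)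
        + γ ^ 2 * (∫ v, gg γ ψ v * ((v i) ^ 2 * W (-γ - 2) v))
        - γ * ∫ v, pDeriv (gg γ ψ) i v * (v i * W (-γ - 1) v)) :=
        Finset.sum_congr rfl fun i _ => hterm i
    _ = (∑ i, ∫ v, ‖pDeriv (phi γ ψ) i v‖ ^ 2 * W (-γ) v)
        + γ ^ 2 * (∑ i, ∫ v, gg γ ψ v * ((v i) ^ 2 * W (-γ - 2) v))
        - γ * ∑ i, ∫ v, pDeriv (gg γ ψ) i v * (v i * W (-γ - 1) v) := by
        rw [Finset.sum_sub_distrib, Finset.sum_add_distrib, ← Finset.mul_sum, ← Finset.mul_sum]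
    _ = _ := by
        rw [sumA hψ hψs, sum_sq_int hψ hψs, sum_ibp hψ hψs]
        ring

lemma hardy (h1 : (d : ℝ) / 2 < γ) :
    ∫ v, gg γ ψ v * W (-γ - 1) v
      ≤ ((2/(2*γ+2-(d:ℝ))) * (2/(2*γ+2-(d:ℝ))))
          * (∫ v, (∑ i, ‖pDeriv (phi γ ψ) i v‖ ^ 2) * W (-γ) v)
        + ((2/(2*γ+2-(d:ℝ))) * (2*γ+2)) * ∫ v, gg γ ψ v * W (-γ - 2) v := by
  set c : ℝ := 2*γ+2-(d:ℝ) with hcdef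
  have hc : 0 < c := by simp only [hcdef]; linarith
  have hlam : 0 < 2/c := by positivity
  have hmono : ∫ v, ∑ i, pDeriv (gg γ ψ) i v * (v i * W (-γ - 1) v)
      ≤ ∫ v, ((2/c) * ((∑ i, ‖pDeriv (phi γ ψ) i v‖ ^ 2) * W (-γ) v)
        + (1/(2/c)) * (gg γ ψ v * W (-γ - 1) v)) := by
    apply integral_mono
    · exact integrable_finset_sum _ (fun i _ => intg_I3 hψ hψs i)
    · exact ((intg_A hψ hψs).const_mul _).add ((intg_ggW hψ hψs _).const_mul _)
    · intro v
      exact keybound hψ (2/c) hlam v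
  rw [integral_finset_sum _ (fun i _ => intg_I3 hψ hψs i)] at hmono
  rw [integral_add ((intg_A hψ hψs).const_mul _) ((intg_ggW hψ hψs _).const_mul _),
    integral_const_mul, integral_const_mul] at hmono
  rw [sum_ibp hψ hψs] at hmono
  have hinv : 1/(2/c) = c/2 := by
    field_simp
  rw [hinv] at hmono
  set A := ∫ v, (∑ i, ‖pDeriv (phi γ ψ) i v‖ ^ 2) * W (-γ) v
  set Q := ∫ v, gg γ ψ v * W (-γ - 1) v
  set B := ∫ v, gg γ ψ v * W (-γ - 2) v
  have key : (c/2) * Q ≤ (2/c) * A + (2*γ+2) * B := by linarith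
  have h6 := mul_le_mul_of_nonneg_left key hlam.le
  have h4 : (2/c) * ((c/2) * Q) = Q := by
    field_simp
  rw [h4] at h6
  calc Q ≤ (2/c) * ((2/c) * A + (2*γ+2) * B) := h6
    _ = (2/c) * (2/c) * A + ((2/c) * (2*γ+2)) * B := by ring

end integrals
end psi

lemma assemble (A Q Bt P E κ k a bt K : ℝ)
    (hA0 : 0 ≤ A) (hQ0 : 0 ≤ Q) (hBt0 : 0 ≤ Bt) (hP0 : 0 ≤ P) (hE0 : 0 ≤ E)
    (hk0 : 0 ≤ k) (ha0 : 0 ≤ a) (hbt0 : 0 ≤ bt)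
    (hk1 : κ ≤ k) (hk2 : -κ ≤ k)
    (hKdef : K = 1 + (1+k)*(1+a+bt))
    (hE1 : P = A - κ*Q + Bt)
    (hHardy : Q ≤ a*A + bt*Bt) :
    P + Q + E ≤ K*(A+Bt+E) ∧ A+Bt+E ≤ K*(P+Q+E) := by
  subst hKdef
  have h1 : (1+k)*Q ≤ (1+k)*(a*A+bt*Bt) :=
    mul_le_mul_of_nonneg_left hHardy (by linarith)
  have hnegκQ : (-κ)*Q ≤ k*Q := mul_le_mul_of_nonneg_right hk2 hQ0
  have hκQ : κ*Q ≤ k*Q := mul_le_mul_of_nonneg_right hk1 hQ0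
  have key : 0 ≤ (1+k)*((1+a+bt)*(A+Bt+E) - (a*A+bt*Bt)) := by
    apply mul_nonneg (by linarith)
    nlinarith [mul_nonneg ha0 hBt0, mul_nonneg ha0 hE0, mul_nonneg hbt0 hA0,
      mul_nonneg hbt0 hE0, mul_nonneg ha0 hA0, mul_nonneg hbt0 hBt0]
  constructor
  · nlinarith [key, h1, hnegκQ]
  · nlinarith [mul_nonneg hk0 hP0, mul_nonneg hk0 hQ0, mul_nonneg hk0 hE0,
      mul_nonneg ha0 hP0, mul_nonneg ha0 hQ0, mul_nonneg ha0 hE0,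
      mul_nonneg hbt0 hP0, mul_nonneg hbt0 hQ0, mul_nonneg hbt0 hE0,
      mul_nonneg (mul_nonneg hk0 ha0) hP0, mul_nonneg (mul_nonneg hk0 ha0) hQ0,
      mul_nonneg (mul_nonneg hk0 ha0) hE0,
      mul_nonneg (mul_nonneg hk0 hbt0) hP0, mul_nonneg (mul_nonneg hk0 hbt0) hQ0,
      mul_nonneg (mul_nonneg hk0 hbt0) hE0, hκQ]

end Stmt7Aux

open Stmt7Aux

theorem stmt7 (d : ℕ) (hd : 0 < d) (γ : ℝ)
    (h1 : (d : ℝ) / 2 < γ) (h2 : γ < ((d : ℝ) + 4) / 2)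
    (M : EuclideanSpace ℝ (Fin d) → ℝ)
    (hM : ∀ v, M v = (1 + ‖v‖ ^ 2) ^ (-(γ / 2))) :
    ∃ C₁ C₂ : ℝ, 0 < C₁ ∧ 0 < C₂ ∧
      ∀ η : ℝ, 0 ≤ η →
        ∀ ψ : EuclideanSpace ℝ (Fin d) → ℂ, ContDiff ℝ (⊤ : ℕ∞) ψ → HasCompactSupport ψ →
          C₁ * Real.sqrt ((∫ v, (∑ i, ‖pDeriv (fun w => ψ w / (M w : ℂ)) i v‖ ^ 2) * (M v) ^ 2)
                + (∫ v, (γ * (γ + 2) / (1 + ‖v‖ ^ 2) ^ 2) * ‖ψ v‖ ^ 2)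
                + η * ∫ v, |v ⟨0, hd⟩| * ‖ψ v‖ ^ 2)
            ≤ Real.sqrt ((∫ v, ∑ i, ‖pDeriv ψ i v‖ ^ 2)
                + (∫ v, ‖ψ v‖ ^ 2 / (1 + ‖v‖ ^ 2))
                + η * ∫ v, |v ⟨0, hd⟩| * ‖ψ v‖ ^ 2)
          ∧ Real.sqrt ((∫ v, ∑ i, ‖pDeriv ψ i v‖ ^ 2)
                + (∫ v, ‖ψ v‖ ^ 2 / (1 + ‖v‖ ^ 2))
                + η * ∫ v, |v ⟨0, hd⟩| * ‖ψ v‖ ^ 2)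
            ≤ C₂ * Real.sqrt ((∫ v, (∑ i, ‖pDeriv (fun w => ψ w / (M w : ℂ)) i v‖ ^ 2) * (M v) ^ 2)
                + (∫ v, (γ * (γ + 2) / (1 + ‖v‖ ^ 2) ^ 2) * ‖ψ v‖ ^ 2)
                + η * ∫ v, |v ⟨0, hd⟩| * ‖ψ v‖ ^ 2) := by
  have hMe : M = fun v => (1 + ‖v‖ ^ 2) ^ (-(γ / 2)) := funext hM
  subst hMe
  have hd1 : (1:ℝ) ≤ (d:ℝ) := by exact_mod_cast hd
  have hγ : 0 < γ := by linarith
  have hγ2 : 0 < γ * (γ + 2) := by nlinarith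
  set c : ℝ := 2*γ+2-(d:ℝ) with hcdef
  have hc0 : 0 < c := by rw [hcdef]; linarith
  set a : ℝ := (2/c) * (2/c) with hadef
  set b : ℝ := (2/c) * (2*γ+2) with hbdef
  have ha0 : 0 ≤ a := by positivity
  have hb0 : 0 ≤ b := by rw [hbdef]; positivity
  set bt : ℝ := b / (γ*(γ+2)) with hbtdef
  have hbt0 : 0 ≤ bt := by rw [hbtdef]; positivity
  set k : ℝ := |γ * (γ + 2 - (d:ℝ))| with hkdef
  have hk0 : 0 ≤ k := abs_nonneg _
  set K : ℝ := 1 + (1+k) * (1+a+bt) with hKdef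
  have hK1 : 1 ≤ K := by rw [hKdef]; nlinarith
  have hK0 : 0 < K := by linarith
  have hsK : 0 < Real.sqrt K := Real.sqrt_pos.mpr hK0
  refine ⟨(Real.sqrt K)⁻¹, Real.sqrt K, by positivity, hsK, ?_⟩
  intro η hη ψ hψ hψs
  -- replace the quotient function with phi
  have hphieq : (fun w : EuclideanSpace ℝ (Fin d) =>
      ψ w / (((1 + ‖w‖ ^ 2) ^ (-(γ / 2)) : ℝ) : ℂ)) = phi γ ψ :=
    funext fun w => phi_eq_div w
  rw [hphieq]
  -- rewrite the three non-standard integrals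
  have hI1 : (∫ v : EuclideanSpace ℝ (Fin d),
      (∑ i, ‖pDeriv (phi γ ψ) i v‖ ^ 2) * ((1 + ‖v‖ ^ 2) ^ (-(γ / 2))) ^ 2)
      = ∫ v : EuclideanSpace ℝ (Fin d), (∑ i, ‖pDeriv (phi γ ψ) i v‖ ^ 2) * W (-γ) v := by
    congr 1
    funext v
    congr 1
    rw [show ((1:ℝ) + ‖v‖ ^ 2) ^ (-(γ / 2)) = W (-(γ/2)) v from rfl, sq, W_mul]
    congr 1
    ring
  have hI2 : (∫ v : EuclideanSpace ℝ (Fin d), γ * (γ + 2) / (1 + ‖v‖ ^ 2) ^ 2 * ‖ψ v‖ ^ 2)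
      = γ * (γ + 2) * ∫ v : EuclideanSpace ℝ (Fin d), gg γ ψ v * W (-γ - 2) v := by
    rw [← integral_const_mul]
    congr 1
    funext v
    exact convB v
  have hI3 : (∫ v : EuclideanSpace ℝ (Fin d), ‖ψ v‖ ^ 2 / (1 + ‖v‖ ^ 2))
      = ∫ v : EuclideanSpace ℝ (Fin d), gg γ ψ v * W (-γ - 1) v := by
    congr 1
    funext v
    exact convQ v
  rw [hI1, hI2, hI3]
  -- canonical quantities
  set A : ℝ := ∫ v : EuclideanSpace ℝ (Fin d), (∑ i, ‖pDeriv (phi γ ψ) i v‖ ^ 2) * W (-γ) v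
    with hAdef
  set Q : ℝ := ∫ v : EuclideanSpace ℝ (Fin d), gg γ ψ v * W (-γ - 1) v with hQdef
  set B : ℝ := ∫ v : EuclideanSpace ℝ (Fin d), gg γ ψ v * W (-γ - 2) v with hBdef
  set P : ℝ := ∫ v : EuclideanSpace ℝ (Fin d), ∑ i, ‖pDeriv ψ i v‖ ^ 2 with hPdef
  set E : ℝ := η * ∫ v : EuclideanSpace ℝ (Fin d), |v ⟨0, hd⟩| * ‖ψ v‖ ^ 2 with hEdef
  have hA0 : 0 ≤ A := by
    rw [hAdef]
    apply integral_nonneg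
    intro v
    exact mul_nonneg (Finset.sum_nonneg fun i _ => sq_nonneg _) (W_pos _ v).le
  have hQ0 : 0 ≤ Q := by
    rw [hQdef]
    exact integral_nonneg fun v => mul_nonneg (gg_nonneg v) (W_pos _ v).le
  have hB0 : 0 ≤ B := by
    rw [hBdef]
    exact integral_nonneg fun v => mul_nonneg (gg_nonneg v) (W_pos _ v).le
  have hP0 : 0 ≤ P := by
    rw [hPdef]
    exact integral_nonneg fun v => Finset.sum_nonneg fun i _ => sq_nonneg _
  have hE0 : 0 ≤ E := by
    rw [hEdef]
    exact mul_nonneg hη (integral_nonneg fun v => mul_nonneg (abs_nonneg _) (sq_nonneg _))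
  -- the two analytic facts
  have hE1 : P = A - (γ * (γ + 2 - (d:ℝ))) * Q + (γ * (γ + 2)) * B := E1 hψ hψs
  have hHardy : Q ≤ a * A + b * B := hardy hψ hψs h1
  have hbtB : bt * ((γ * (γ + 2)) * B) = b * B := by
    rw [hbtdef]
    field_simp
  have hk1 : γ * (γ + 2 - (d:ℝ)) ≤ k := le_abs_self _
  have hk2 : -(γ * (γ + 2 - (d:ℝ))) ≤ k := neg_le_abs _
  set Bt : ℝ := (γ * (γ + 2)) * B with hBtdef
  have hBt0 : 0 ≤ Bt := by rw [hBtdef]; positivity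
  have hHardy' : Q ≤ a * A + bt * Bt := by rw [hBtdef, hbtB]; exact hHardy
  have hE1' : P = A - (γ * (γ + 2 - (d:ℝ))) * Q + Bt := by rw [hBtdef]; linarith [hE1]
  obtain ⟨hup, hlow⟩ := assemble A Q Bt P E (γ * (γ + 2 - (d:ℝ))) k a bt K
    hA0 hQ0 hBt0 hP0 hE0 hk0 ha0 hbt0 hk1 hk2 hKdef hE1' hHardy'
  constructor
  · have s1 : Real.sqrt (A + Bt + E) ≤ Real.sqrt K * Real.sqrt (P + Q + E) := by
      rw [← Real.sqrt_mul hK0.le]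
      exact Real.sqrt_le_sqrt hlow
    calc (Real.sqrt K)⁻¹ * Real.sqrt (A + Bt + E)
        ≤ (Real.sqrt K)⁻¹ * (Real.sqrt K * Real.sqrt (P + Q + E)) :=
          mul_le_mul_of_nonneg_left s1 (by positivity)
      _ = Real.sqrt (P + Q + E) := by
          rw [← mul_assoc, inv_mul_cancel₀ hsK.ne', one_mul]
  · have s2 : Real.sqrt (P + Q + E) ≤ Real.sqrt K * Real.sqrt (A + Bt + E) := by
      rw [← Real.sqrt_mul hK0.le]
      exact Real.sqrt_le_sqrt hup
    exact s2

end
end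

section
/- Let d ≥ 1 and η > 0. There exists a constant C₀ > 0 independent of η such that for every ψ ∈ C_c^∞(ℝ^d, ℂ), ‖ψ‖_{L²(ℝ^d)} ≤ C₀ η^{-1/3} ( ∫_{ℝ^d}|∇_v ψ|² dv + ∫_{ℝ^d} |ψ|²⟨v⟩^{-2} dv + η ∫_{ℝ^d} |v₁||ψ|² dv )^{1/2}. -/
set_option maxHeartbeats 1000000
open MeasureTheory Real

private lemma integral_fderiv_cs {d : ℕ} (F : EuclideanSpace ℝ (Fin d) → ℝ)
    (hF : ContDiff ℝ (⊤ : ℕ∞) F) (hc : HasCompactSupport F) (w : EuclideanSpace ℝ (Fin d)) :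
    ∫ v, fderiv ℝ F v w = 0 := by
  obtain ⟨C, hC⟩ := hF.lipschitzWith_of_hasCompactSupport hc (by simp)
  have h := LipschitzWith.integral_lineDeriv_mul_eq
    (μ := (volume : Measure (EuclideanSpace ℝ (Fin d))))
    (f := fun _ => (1:ℝ)) (g := F) (LipschitzWith.const 1) hC hc (-w)
  have hlc : ∀ (x u : EuclideanSpace ℝ (Fin d)),
      lineDeriv ℝ (fun _ : EuclideanSpace ℝ (Fin d) => (1:ℝ)) x u = 0 := by
    intro x u
    rw [(differentiableAt_const (1:ℝ)).lineDeriv_eq_fderiv, fderiv_fun_const]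
    simp
  simp only [hlc, zero_mul, integral_zero, neg_neg, mul_one] at h
  have he : ∀ v : EuclideanSpace ℝ (Fin d), lineDeriv ℝ F v w = fderiv ℝ F v w := fun v =>
    ((hF.differentiable (by simp)) v).lineDeriv_eq_fderiv
  rw [integral_congr_ae (Filter.Eventually.of_forall he)] at h
  exact h.symm

private lemma ptIneq (R p q a b gt g't t : ℝ) (hR : 0 < R)
    (hgabs : |gt| ≤ π/2 * R)
    (hlow : 1 ≤ 2 * g't + |t| / R) :
    p^2 + q^2 ≤ 2 * (g't * (p^2+q^2) + gt * (2*p*a + 2*q*b)) + (1/R) * (|t| * (p^2+q^2))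
      + (1/4) * (p^2+q^2) + 4*π^2*R^2 * (a^2+b^2) := by
  have hπR : 0 < π * R := mul_pos Real.pi_pos hR
  have h1 : -((π*R) * |2*p*a+2*q*b|) ≤ 2 * (gt * (2*p*a+2*q*b)) := by
    have h2 : 2 * |gt * (2*p*a+2*q*b)| ≤ (π*R) * |2*p*a+2*q*b| := by
      rw [abs_mul]
      nlinarith [abs_nonneg (2*p*a+2*q*b), abs_nonneg gt]
    have h3 := neg_abs_le (gt * (2*p*a+2*q*b))
    linarith [abs_nonneg (gt * (2*p*a+2*q*b))]
  have h4 : |2*p*a+2*q*b| ≤ 2 * |p| * |a| + 2 * |q| * |b| := by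
    calc |2*p*a+2*q*b| ≤ |2*p*a| + |2*q*b| := abs_add_le _ _
    _ = 2 * |p| * |a| + 2 * |q| * |b| := by rw [abs_mul, abs_mul, abs_mul, abs_mul, abs_two]
  have h4' : (π*R) * |2*p*a+2*q*b| ≤ (π*R) * (2 * |p| * |a| + 2 * |q| * |b|) :=
    mul_le_mul_of_nonneg_left h4 hπR.le
  have h5 : (π*R) * (2 * |p| * |a| + 2 * |q| * |b|)
      ≤ 1/4*(|p|^2+|q|^2) + 4*π^2*R^2*(|a|^2+|b|^2) := by
    nlinarith [sq_nonneg (|p|/2 - 2*(π*R) * |a|), sq_nonneg (|q|/2 - 2*(π*R) * |b|)]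
  rw [sq_abs, sq_abs, sq_abs, sq_abs] at h5
  have h6 : (p^2+q^2) ≤ 2*g't*(p^2+q^2) + (|t| / R) * (p^2+q^2) := by nlinarith [sq_nonneg p, sq_nonneg q]
  have h7 : (|t| / R) * (p^2+q^2) = (1/R) * (|t| * (p^2+q^2)) := by ring
  linarith

noncomputable section

theorem stmt8 (d : ℕ) (hd : 0 < d) :
    ∃ C₀ : ℝ, 0 < C₀ ∧
      ∀ η : ℝ, 0 < η →
        ∀ ψ : EuclideanSpace ℝ (Fin d) → ℂ, ContDiff ℝ (⊤ : ℕ∞) ψ → HasCompactSupport ψ →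
          Real.sqrt (∫ v, ‖ψ v‖ ^ 2)
            ≤ C₀ * η ^ (-(1 : ℝ) / 3) *
              Real.sqrt ((∫ v, ∑ i, ‖pDeriv ψ i v‖ ^ 2)
                + (∫ v, ‖ψ v‖ ^ 2 / (1 + ‖v‖ ^ 2))
                + η * ∫ v, |v ⟨0, hd⟩| * ‖ψ v‖ ^ 2) := by
  refine ⟨8, by norm_num, ?_⟩
  intro η hη ψ hψ hψc
  simp only [pDeriv]
  have hψd : Differentiable ℝ ψ := hψ.differentiable (by simp)
  set i₁ : Fin d := ⟨0, hd⟩ with hi₁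
  set R : ℝ := η ^ (-(1:ℝ)/3) with hRdef
  have hR : 0 < R := Real.rpow_pos_of_pos hη _
  set e : EuclideanSpace ℝ (Fin d) := EuclideanSpace.single i₁ 1 with he
  set N : EuclideanSpace ℝ (Fin d) → ℝ :=
    fun v => (ψ v).re * (ψ v).re + (ψ v).im * (ψ v).im with hNdef
  have hNapp : ∀ v : EuclideanSpace ℝ (Fin d), ‖ψ v‖^2 = N v := by
    intro v
    rw [hNdef, Complex.sq_norm, Complex.normSq_apply]
  have hNsq : ∀ v : EuclideanSpace ℝ (Fin d), N v = (ψ v).re^2 + (ψ v).im^2 := by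
    intro v; rw [hNdef]; ring
  set g : ℝ → ℝ := fun x => R * Real.arctan (x / R) with hgdef
  set g' : ℝ → ℝ := fun x => 1 / (1 + (x / R)^2) with hg'def
  set F : EuclideanSpace ℝ (Fin d) → ℝ := fun v => g (v i₁) * N v with hFdef
  set DN : (EuclideanSpace ℝ (Fin d)) → (EuclideanSpace ℝ (Fin d) →L[ℝ] ℝ) := fun v =>
    ((ψ v).re • ((Complex.reCLM : ℂ →L[ℝ] ℝ).comp (fderiv ℝ ψ v))
      + (ψ v).re • ((Complex.reCLM : ℂ →L[ℝ] ℝ).comp (fderiv ℝ ψ v)))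
    + ((ψ v).im • ((Complex.imCLM : ℂ →L[ℝ] ℝ).comp (fderiv ℝ ψ v))
      + (ψ v).im • ((Complex.imCLM : ℂ →L[ℝ] ℝ).comp (fderiv ℝ ψ v))) with hDNdef
  set DF : (EuclideanSpace ℝ (Fin d)) → (EuclideanSpace ℝ (Fin d) →L[ℝ] ℝ) := fun v =>
    g (v i₁) • DN v
      + N v • (g' (v i₁) • (EuclideanSpace.proj i₁ : EuclideanSpace ℝ (Fin d) →L[ℝ] ℝ))
    with hDFdef
  -- basic smoothness / support
  have hNsm : ContDiff ℝ (⊤ : ℕ∞) N := by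
    rw [hNdef]
    exact ((Complex.reCLM.contDiff.comp hψ).mul (Complex.reCLM.contDiff.comp hψ)).add
      ((Complex.imCLM.contDiff.comp hψ).mul (Complex.imCLM.contDiff.comp hψ))
  have hNcs : HasCompactSupport N := by
    rw [hNdef]
    exact hψc.comp_left (g := fun z : ℂ => z.re * z.re + z.im * z.im) (by simp)
  have hgsm : ContDiff ℝ (⊤ : ℕ∞) g := by
    rw [hgdef]
    exact contDiff_const.mul (Real.contDiff_arctan.comp (contDiff_id.div_const R))
  have hFsm : ContDiff ℝ (⊤ : ℕ∞) F := by
    rw [hFdef]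
    apply ContDiff.mul
    · exact hgsm.comp (f := fun x : EuclideanSpace ℝ (Fin d) => x i₁) (EuclideanSpace.proj i₁ : EuclideanSpace ℝ (Fin d) →L[ℝ] ℝ).contDiff
    · exact hNsm
  have hFcs : HasCompactSupport F := by
    rw [hFdef]
    exact hNcs.mul_left
  -- the derivative of F
  have hψv : ∀ v, HasFDerivAt ψ (fderiv ℝ ψ v) v := fun v => (hψd v).hasFDerivAt
  have hNd : ∀ v, HasFDerivAt N (DN v) v := by
    intro v
    have hp : HasFDerivAt (fun u => (ψ u).re)
        ((Complex.reCLM : ℂ →L[ℝ] ℝ).comp (fderiv ℝ ψ v)) v :=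
      (Complex.reCLM.hasFDerivAt).comp v (hψv v)
    have hq : HasFDerivAt (fun u => (ψ u).im)
        ((Complex.imCLM : ℂ →L[ℝ] ℝ).comp (fderiv ℝ ψ v)) v :=
      (Complex.imCLM.hasFDerivAt).comp v (hψv v)
    rw [hNdef, hDNdef]
    exact (hp.mul hp).add (hq.mul hq)
  have hFd : ∀ v, HasFDerivAt F (DF v) v := by
    intro v
    have hgd : HasDerivAt g (g' (v i₁)) (v i₁) := by
      have h1 : HasDerivAt (fun x : ℝ => x / R) (1/R) (v i₁) := (hasDerivAt_id _).div_const R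
      have h2 : HasDerivAt Real.arctan (1 / (1 + (v i₁ / R)^2)) (v i₁ / R) :=
        Real.hasDerivAt_arctan (v i₁ / R)
      have h3 := (h2.comp (v i₁) h1).const_mul R
      rw [hgdef, hg'def]
      refine h3.congr_deriv ?_
      have hne : (1 + (v i₁ / R)^2) ≠ 0 := by positivity
      field_simp
    have hproj : HasFDerivAt (fun u : EuclideanSpace ℝ (Fin d) => u i₁)
        (EuclideanSpace.proj i₁ : EuclideanSpace ℝ (Fin d) →L[ℝ] ℝ) v :=
      by exact (EuclideanSpace.proj i₁ : EuclideanSpace ℝ (Fin d) →L[ℝ] ℝ).hasFDerivAt (x := v)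
    have hgl : HasFDerivAt (fun u : EuclideanSpace ℝ (Fin d) => g (u i₁))
        ((g' (v i₁)) • (EuclideanSpace.proj i₁ : EuclideanSpace ℝ (Fin d) →L[ℝ] ℝ)) v :=
      HasDerivAt.comp_hasFDerivAt (f := fun u : EuclideanSpace ℝ (Fin d) => u i₁) v hgd hproj
    rw [hFdef, hDFdef]
    exact hgl.mul (hNd v)
  -- value of the derivative at e
  have hDFe : ∀ v, DF v e = g' (v i₁) * N v
      + g (v i₁) * (2*(ψ v).re*(fderiv ℝ ψ v e).re + 2*(ψ v).im*(fderiv ℝ ψ v e).im) := by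
    intro v
    rw [hDFdef, hDNdef]
    simp only [ContinuousLinearMap.add_apply, ContinuousLinearMap.smul_apply,
      ContinuousLinearMap.comp_apply, smul_eq_mul, Complex.reCLM_apply, Complex.imCLM_apply]
    have hpe : (EuclideanSpace.proj i₁ : EuclideanSpace ℝ (Fin d) →L[ℝ] ℝ) e = 1 := by
      rw [he]
      simp [EuclideanSpace.single_apply]
    rw [hpe]
    ring
  -- pointwise inequality
  have key : ∀ v, N v ≤ 2 * (DF v e) + (1/R) * (|v i₁| * N v)
      + (1/4) * N v + 4*π^2*R^2 * ‖fderiv ℝ ψ v e‖^2 := by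
    intro v
    have hwsq : ‖fderiv ℝ ψ v e‖^2 = (fderiv ℝ ψ v e).re^2 + (fderiv ℝ ψ v e).im^2 := by
      rw [Complex.sq_norm, Complex.normSq_apply]; ring
    have hgabs : |g (v i₁)| ≤ π/2 * R := by
      rw [hgdef]
      simp only []
      rw [abs_mul, abs_of_pos hR]
      have h1 := Real.arctan_lt_pi_div_two (v i₁ / R)
      have h2 := Real.neg_pi_div_two_lt_arctan (v i₁ / R)
      have h3 : |Real.arctan (v i₁ / R)| ≤ π/2 := by
        rw [abs_le]; constructor <;> linarith
      calc R * |Real.arctan (v i₁ / R)| ≤ R * (π/2) := by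
            exact mul_le_mul_of_nonneg_left h3 hR.le
      _ = π/2 * R := by ring
    have hlow : 1 ≤ 2 * g' (v i₁) + |v i₁| / R := by
      rw [hg'def]
      simp only []
      rcases le_or_gt |v i₁| R with h | h
      · have hpos : (0:ℝ) < 1 + (v i₁ / R)^2 := by positivity
        have h2 : (v i₁ / R)^2 ≤ 1 := by
          rw [div_pow, div_le_one (by positivity)]
          calc (v i₁)^2 = |v i₁|^2 := (sq_abs _).symm
          _ ≤ R^2 := by nlinarith [abs_nonneg (v i₁)]
        have h3 : 1 + (v i₁ / R)^2 ≤ 2 := by linarith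
        have h4 : (1:ℝ)/2 ≤ 1 / (1 + (v i₁ / R)^2) := by
          rw [div_le_div_iff₀ (by norm_num) hpos]
          linarith
        have h5 : 0 ≤ |v i₁| / R := by positivity
        linarith
      · have h6 : 1 < |v i₁| / R := (one_lt_div hR).2 h
        have h7 : 0 ≤ 1 / (1 + (v i₁ / R)^2) := by positivity
        linarith
    have := ptIneq R (ψ v).re (ψ v).im (fderiv ℝ ψ v e).re (fderiv ℝ ψ v e).im
      (g (v i₁)) (g' (v i₁)) (v i₁) hR hgabs hlow
    rw [hDFe v, hwsq, hNsq v]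
    linarith [this]
  -- integrability
  have contN : Continuous N := hNsm.continuous
  have intN : Integrable N := contN.integrable_of_hasCompactSupport hNcs
  have contD : Continuous (fderiv ℝ ψ) := hψ.continuous_fderiv (by simp)
  have intDi : ∀ i : Fin d,
      Integrable (fun v => ‖fderiv ℝ ψ v (EuclideanSpace.single i 1)‖^2) := by
    intro i
    apply Continuous.integrable_of_hasCompactSupport
    · exact ((ContinuousLinearMap.apply ℝ ℂ
        (EuclideanSpace.single i 1 : EuclideanSpace ℝ (Fin d))).continuous.comp
          contD).norm.pow 2
    · exact (hψc.fderiv (𝕜 := ℝ)).comp_left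
        (g := fun L : EuclideanSpace ℝ (Fin d) →L[ℝ] ℂ =>
          ‖L (EuclideanSpace.single i 1)‖^2) (by simp)
  have intDe : Integrable (fun v => ‖fderiv ℝ ψ v e‖^2) := by
    rw [he]; exact intDi i₁
  have contProj : Continuous (fun v : EuclideanSpace ℝ (Fin d) => v i₁) :=
    (EuclideanSpace.proj i₁ : EuclideanSpace ℝ (Fin d) →L[ℝ] ℝ).continuous
  have intB : Integrable (fun v => |v i₁| * N v) := by
    apply Continuous.integrable_of_hasCompactSupport (contProj.abs.mul contN)
    exact hNcs.mul_left
  have hGeq : (fun v => fderiv ℝ F v e) = fun v => DF v e := by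
    funext v; rw [(hFd v).fderiv]
  have intG : Integrable (fun v => DF v e) := by
    rw [← hGeq]
    apply Continuous.integrable_of_hasCompactSupport
    · exact (ContinuousLinearMap.apply ℝ ℝ e).continuous.comp (hFsm.continuous_fderiv (by simp))
    · exact (hFcs.fderiv (𝕜 := ℝ)).comp_left
        (g := fun L : EuclideanSpace ℝ (Fin d) →L[ℝ] ℝ => L e) (by simp)
  have hG0 : ∫ v, DF v e = 0 := by
    have h := integral_fderiv_cs F hFsm hFcs e
    rw [hGeq] at h
    exact h
  -- integrate the pointwise inequality
  have intRHS : Integrable (fun v => 2 * (DF v e) + (1/R) * (|v i₁| * N v)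
      + (1/4) * N v + 4*π^2*R^2 * ‖fderiv ℝ ψ v e‖^2) :=
    (((intG.const_mul 2).add (intB.const_mul (1/R))).add (intN.const_mul (1/4))).add
      (intDe.const_mul (4*π^2*R^2))
  have hmono : ∫ v, N v ≤ ∫ v, (2 * (DF v e) + (1/R) * (|v i₁| * N v)
      + (1/4) * N v + 4*π^2*R^2 * ‖fderiv ℝ ψ v e‖^2) :=
    integral_mono intN intRHS key
  have iG2 : Integrable (fun v => 2 * (DF v e)) := intG.const_mul 2
  have iB' : Integrable (fun v => (1/R) * (|v i₁| * N v)) := intB.const_mul (1/R)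
  have iN4 : Integrable (fun v => (1/4) * N v) := intN.const_mul (1/4)
  have iD4 : Integrable (fun v => 4*π^2*R^2 * ‖fderiv ℝ ψ v e‖^2) := intDe.const_mul _
  have i12 : Integrable (fun v => 2 * (DF v e) + (1/R) * (|v i₁| * N v)) := iG2.add iB'
  have i123 : Integrable (fun v => 2 * (DF v e) + (1/R) * (|v i₁| * N v) + (1/4) * N v) :=
    i12.add iN4
  rw [integral_add i123 iD4, integral_add i12 iN4, integral_add iG2 iB',
    integral_const_mul, integral_const_mul, integral_const_mul, integral_const_mul, hG0]
    at hmono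
  -- compare with the full gradient sum
  have intSum : Integrable (fun v => ∑ i, ‖fderiv ℝ ψ v (EuclideanSpace.single i 1)‖^2) :=
    integrable_finset_sum _ (fun i _ => intDi i)
  have hAle : ∫ v, ‖fderiv ℝ ψ v e‖^2
      ≤ ∫ v, ∑ i, ‖fderiv ℝ ψ v (EuclideanSpace.single i 1)‖^2 := by
    refine integral_mono intDe intSum fun v => ?_
    simp only
    rw [he]
    exact Finset.single_le_sum
      (f := fun i => ‖fderiv ℝ ψ v (EuclideanSpace.single i 1)‖^2)
      (fun i _ => by positivity) (Finset.mem_univ i₁)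
  -- nonnegativity
  have hX0 : 0 ≤ ∫ v, N v := integral_nonneg fun v => by rw [hNsq v]; positivity
  have hB0 : 0 ≤ ∫ v, |v i₁| * N v :=
    integral_nonneg fun v => mul_nonneg (abs_nonneg _) (by rw [hNsq v]; positivity)
  have hI10 : 0 ≤ ∫ v, ∑ i, ‖fderiv ℝ ψ v (EuclideanSpace.single i 1)‖^2 :=
    integral_nonneg fun v => Finset.sum_nonneg fun i _ => by positivity
  have hI20 : 0 ≤ ∫ v, N v / (1 + ‖v‖^2) :=
    integral_nonneg fun v => div_nonneg (by rw [hNsq v]; positivity) (by positivity)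
  -- rpow arithmetic
  have hRsq : R^2 = η ^ (-(2:ℝ)/3) := by
    rw [hRdef, ← Real.rpow_natCast (η ^ (-(1:ℝ)/3)) 2, ← Real.rpow_mul hη.le]
    norm_num
  have hRinv : 1/R = η ^ (-(2:ℝ)/3) * η := by
    have h2 : η ^ (-(2:ℝ)/3) * η = η ^ ((1:ℝ)/3) := by
      rw [← Real.rpow_add_one hη.ne' (-(2:ℝ)/3)]
      norm_num
    rw [h2, hRdef, neg_div, Real.rpow_neg hη.le, one_div, inv_inv]
  have hπsq : π^2 ≤ 10 := by nlinarith [Real.pi_lt_d2, Real.pi_pos]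
  have hu : (0:ℝ) < η ^ (-(2:ℝ)/3) := Real.rpow_pos_of_pos hη _
  -- final bound
  have hfin : ∫ v, N v ≤ 64 * R^2 *
      ((∫ v, ∑ i, ‖fderiv ℝ ψ v (EuclideanSpace.single i 1)‖^2)
        + (∫ v, N v / (1 + ‖v‖^2)) + η * ∫ v, |v i₁| * N v) := by
    have h9 : (4*π^2*R^2) * (∫ v, ‖fderiv ℝ ψ v e‖^2)
        ≤ (4*π^2*R^2) * (∫ v, ∑ i, ‖fderiv ℝ ψ v (EuclideanSpace.single i 1)‖^2) :=
      mul_le_mul_of_nonneg_left hAle (by positivity)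
    have hstep : ∫ v, N v ≤ (4/3) * (1/R) * (∫ v, |v i₁| * N v)
        + (16/3)*π^2*R^2 * (∫ v, ∑ i, ‖fderiv ℝ ψ v (EuclideanSpace.single i 1)‖^2) := by
      linarith [hmono, h9]
    rw [hRinv, hRsq] at hstep
    rw [hRsq]
    nlinarith [hstep,
      mul_le_mul_of_nonneg_right hπsq (mul_nonneg hu.le hI10),
      mul_nonneg (mul_nonneg hu.le hη.le) hB0,
      mul_nonneg hu.le hI20, mul_nonneg hu.le hI10]
  -- conclude
  simp only [hNapp]
  have hS0 : 0 ≤ (∫ v, ∑ i, ‖fderiv ℝ ψ v (EuclideanSpace.single i 1)‖^2)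
      + (∫ v, N v / (1 + ‖v‖^2)) + η * ∫ v, |v i₁| * N v := by
    have := mul_nonneg hη.le hB0
    linarith
  calc Real.sqrt (∫ v, N v)
      ≤ Real.sqrt (64 * R^2 *
        ((∫ v, ∑ i, ‖fderiv ℝ ψ v (EuclideanSpace.single i 1)‖^2)
          + (∫ v, N v / (1 + ‖v‖^2)) + η * ∫ v, |v i₁| * N v)) := Real.sqrt_le_sqrt hfin
    _ = 8 * R * Real.sqrt ((∫ v, ∑ i, ‖fderiv ℝ ψ v (EuclideanSpace.single i 1)‖^2)
          + (∫ v, N v / (1 + ‖v‖^2)) + η * ∫ v, |v i₁| * N v) := by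
        rw [show (64:ℝ) * R^2 *
            ((∫ v, ∑ i, ‖fderiv ℝ ψ v (EuclideanSpace.single i 1)‖^2)
              + (∫ v, N v / (1 + ‖v‖^2)) + η * ∫ v, |v i₁| * N v)
          = (8*R)^2 * ((∫ v, ∑ i, ‖fderiv ℝ ψ v (EuclideanSpace.single i 1)‖^2)
              + (∫ v, N v / (1 + ‖v‖^2)) + η * ∫ v, |v i₁| * N v) from by ring,
          Real.sqrt_mul (sq_nonneg (8*R)) _, Real.sqrt_sq (by positivity)]

end
end
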